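/- arXiv:0805.1523 — 7 statements merged into one kernel-verified Lean document; each statement's English description precedes it below -/
import Mathlib

section
/- There exists a constant c > 0 such that for all positive integers n, m, k, l and each choice of sign ±: if √n + √m ± √k − √l ≠ 0, then |√n + √m ± √k − √l| ≥ c · (max(n,m,k,l))^{-7/2}. -/
open Real

private lemma aux_bound (x D T : ℝ) (hx : 0 ≤ x) (h1 : 1 ≤ x * D)
    (h2 : D ≤ 2048 * T) (hT : 0 < T) : 1/2048 * T⁻¹ ≤ x := by
  have h3 : 1 ≤ x * (2048 * T) := by nlinarith [mul_le_mul_of_nonneg_left h2 hx]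
  have h4 : 1/(2048*T) ≤ x := (div_le_iff₀ (by positivity)).mpr (by linarith)
  calc 1/2048 * T⁻¹ = 1/(2048*T) := by field_simp
    _ ≤ x := h4

theorem sqrt_four_term_spacing :
    ∃ c > (0:ℝ), ∀ n m k l : ℕ, 0 < n → 0 < m → 0 < k → 0 < l →
      ∀ σ : ℝ, (σ = 1 ∨ σ = -1) →
        Real.sqrt n + Real.sqrt m + σ * Real.sqrt k - Real.sqrt l ≠ 0 →
        c * (max (max n m) (max k l) : ℝ) ^ (-(7:ℝ)/2) ≤
          |Real.sqrt n + Real.sqrt m + σ * Real.sqrt k - Real.sqrt l| := by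
  refine ⟨1/2048, by norm_num, ?_⟩
  intro n m k l hn hm hk hl σ hσ hx
  set a := Real.sqrt n with ha
  set b := Real.sqrt m with hb
  set c := Real.sqrt k with hc
  set d := Real.sqrt l with hd
  set N : ℝ := max (max (n:ℝ) (m:ℝ)) (max (k:ℝ) (l:ℝ)) with hN
  have ha2 : a^2 = n := Real.sq_sqrt (by positivity)
  have hb2 : b^2 = m := Real.sq_sqrt (by positivity)
  have hc2 : c^2 = k := Real.sq_sqrt (by positivity)
  have hd2 : d^2 = l := Real.sq_sqrt (by positivity)
  have hσle : σ ≤ 1 := by rcases hσ with h|h <;> rw [h] <;> norm_num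
  have hσge : -1 ≤ σ := by rcases hσ with h|h <;> rw [h] <;> norm_num
  have hσabs : |σ| = 1 := by rcases hσ with h|h <;> rw [h] <;> norm_num
  have hn1 : (1:ℝ) ≤ n := by exact_mod_cast hn
  have hm1 : (1:ℝ) ≤ m := by exact_mod_cast hm
  have hk1 : (1:ℝ) ≤ k := by exact_mod_cast hk
  have hl1 : (1:ℝ) ≤ l := by exact_mod_cast hl
  have ha0 : 0 ≤ a := Real.sqrt_nonneg _
  have hb0 : 0 ≤ b := Real.sqrt_nonneg _
  have hc0 : 0 ≤ c := Real.sqrt_nonneg _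
  have hd0 : 0 ≤ d := Real.sqrt_nonneg _
  have ha1 : 1 ≤ a := Real.one_le_sqrt.mpr hn1
  have hb1 : 1 ≤ b := Real.one_le_sqrt.mpr hm1
  have hc1 : 1 ≤ c := Real.one_le_sqrt.mpr hk1
  have hd1 : 1 ≤ d := Real.one_le_sqrt.mpr hl1
  have hNn : (n:ℝ) ≤ N := le_max_of_le_left (le_max_left _ _)
  have hNm : (m:ℝ) ≤ N := le_max_of_le_left (le_max_right _ _)
  have hNk : (k:ℝ) ≤ N := le_max_of_le_right (le_max_left _ _)
  have hNl : (l:ℝ) ≤ N := le_max_of_le_right (le_max_right _ _)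
  have hN1 : (1:ℝ) ≤ N := hn1.trans hNn
  have hN0 : (0:ℝ) < N := by linarith
  set R := Real.sqrt N with hR
  have hR2 : R^2 = N := Real.sq_sqrt hN0.le
  have hR0 : 0 ≤ R := Real.sqrt_nonneg _
  have hR1 : 1 ≤ R := Real.one_le_sqrt.mpr hN1
  have haR : a ≤ R := Real.sqrt_le_sqrt hNn
  have hbR : b ≤ R := Real.sqrt_le_sqrt hNm
  have hcR : c ≤ R := Real.sqrt_le_sqrt hNk
  have hdR : d ≤ R := Real.sqrt_le_sqrt hNl
  -- bounds on σ * c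
  have hσc1 : σ*c ≤ c := by
    have := mul_le_mul_of_nonneg_right hσle hc0; linarith
  have hσc2 : -c ≤ σ*c := by
    have := mul_le_mul_of_nonneg_right hσge hc0; linarith
  -- power identity
  have hpow : N ^ (-(7:ℝ)/2) = (N^3 * R)⁻¹ := by
    have h7 : N ^ ((7:ℝ)/2) = N^3 * R := by
      rw [show (7:ℝ)/2 = ((3:ℕ):ℝ) + (1/2 : ℝ) by norm_num, Real.rpow_add hN0,
        Real.rpow_natCast, ← Real.sqrt_eq_rpow]
    rw [show -(7:ℝ)/2 = -((7:ℝ)/2) by ring, Real.rpow_neg hN0.le, h7]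
  have hT : 0 < N^3 * R := by positivity
  -- handle degenerate cases first
  by_cases h3 : a + b - σ*c - d = 0
  · -- x = 2σc
    have hxe : a + b + σ*c - d = 2*σ*c := by linear_combination h3
    rw [hxe, abs_mul, abs_mul, hσabs]
    have hle1 : N ^ (-(7:ℝ)/2) ≤ 1 :=
      Real.rpow_le_one_of_one_le_of_nonpos hN1 (by norm_num)
    have h2' : |(2:ℝ)| = 2 := by norm_num
    rw [h2', abs_of_nonneg hc0]
    have hp0 : 0 < N ^ (-(7:ℝ)/2) := Real.rpow_pos_of_pos hN0 _
    linarith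
  by_cases h1 : a + b - σ*c + d = 0
  · -- forces σ = 1, x = 2(c-d)
    have hs1 : σ = 1 := by
      rcases hσ with h|h
      · exact h
      · exfalso; rw [h] at h1; linarith
    subst hs1
    have hxe : a + b + 1*c - d = 2*(c - d) := by linear_combination h1
    rw [hxe]
    have hkl : (k:ℝ) ≠ (l:ℝ) := by
      intro he
      have hcd : c = d := by rw [hc, hd, he]
      apply hx; rw [hxe, hcd]; ring
    have hkl1 : 1 ≤ |(k:ℝ) - l| := by
      have hne : (k:ℤ) ≠ (l:ℤ) := by exact_mod_cast hkl
      have h1' : 1 ≤ |(k:ℤ) - l| := Int.one_le_abs (sub_ne_zero.mpr hne)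
      calc (1:ℝ) = ((1:ℤ):ℝ) := by norm_num
        _ ≤ ((|(k:ℤ) - l| : ℤ) : ℝ) := by exact_mod_cast h1'
        _ = |(k:ℝ) - l| := by push_cast [Int.cast_abs]; ring_nf
    have hcd2 : |c - d| * (c + d) = |(k:ℝ) - l| := by
      rw [← abs_of_nonneg (by linarith : (0:ℝ) ≤ c + d), ← abs_mul]
      congr 1; linear_combination hc2 - hd2
    have hcdlb : 1/(2*R) ≤ |c - d| := by
      rw [div_le_iff₀ (by positivity)]
      have hmono : |c - d| * (c + d) ≤ |c - d| * (2*R) :=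
        mul_le_mul_of_nonneg_left (by linarith) (abs_nonneg _)
      linarith
    have hchain : N ^ (-(7:ℝ)/2) ≤ R⁻¹ := by
      have e1 : N ^ (-(1:ℝ)/2) = R⁻¹ := by
        rw [show -(1:ℝ)/2 = -((1:ℝ)/2) by ring, Real.rpow_neg hN0.le,
          ← Real.sqrt_eq_rpow]
      rw [← e1]
      exact Real.rpow_le_rpow_of_exponent_le hN1 (by norm_num)
    have habs2cd : |2*(c-d)| = 2 * |c - d| := by rw [abs_mul]; norm_num
    rw [habs2cd]
    have hRinv : R⁻¹ ≤ 2 * |c - d| := by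
      rw [inv_eq_one_div, div_le_iff₀ (by positivity : (0:ℝ) < R)]
      have := mul_le_mul_of_nonneg_right hcdlb (by positivity : (0:ℝ) ≤ 2*R)
      calc (1:ℝ) = 1/(2*R) * (2*R) := by field_simp
        _ ≤ |c-d| * (2*R) := this
        _ = 2 * |c-d| * R := by ring
    calc 1/2048 * N ^ (-(7:ℝ)/2) ≤ 1 * N ^ (-(7:ℝ)/2) := by
          apply mul_le_mul_of_nonneg_right (by norm_num)
            (Real.rpow_nonneg hN0.le _)
      _ = N ^ (-(7:ℝ)/2) := by ring
      _ ≤ R⁻¹ := hchain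
      _ ≤ 2 * |c - d| := hRinv
  by_cases h2 : a + b + σ*c + d = 0
  · -- forces σ = -1, x = -2d
    have hs1 : σ = -1 := by
      rcases hσ with h|h
      · exfalso; rw [h] at h2; linarith
      · exact h
    subst hs1
    have hxe : a + b + (-1)*c - d = -(2*d) := by linear_combination h2
    rw [hxe, abs_neg, abs_mul]
    have hle1 : N ^ (-(7:ℝ)/2) ≤ 1 :=
      Real.rpow_le_one_of_one_le_of_nonpos hN1 (by norm_num)
    rw [abs_of_nonneg hd0, show |(2:ℝ)| = 2 by norm_num]
    have hp0 : 0 < N ^ (-(7:ℝ)/2) := Real.rpow_pos_of_pos hN0 _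
    linarith
  -- main case
  set A : ℝ := (n:ℝ) + m - k - l with hA
  set B : ℝ := A^2 + 4*n*m - 4*k*l with hB
  have hprod : (a + b + σ*c - d) * ((a + b - σ*c + d) * ((a + b + σ*c + d) *
      (a + b - σ*c - d))) = B + 4*A*(a*b) := by
    rw [hB, hA, ← ha2, ← hb2, ← hc2, ← hd2]
    rcases hσ with h|h <;> rw [h] <;> ring
  have hx123 : (a + b - σ*c + d) * ((a + b + σ*c + d) * (a + b - σ*c - d)) ≠ 0 :=
    mul_ne_zero h1 (mul_ne_zero h2 h3)
  have hprodne : B + 4*A*(a*b) ≠ 0 := by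
    rw [← hprod]; exact mul_ne_zero hx hx123
  -- bounds on factors
  have habs1 : |a + b - σ*c + d| ≤ 4*R :=
    abs_le.mpr ⟨by linarith, by linarith⟩
  have habs2 : |a + b + σ*c + d| ≤ 4*R :=
    abs_le.mpr ⟨by linarith, by linarith⟩
  have habs3 : |a + b - σ*c - d| ≤ 4*R :=
    abs_le.mpr ⟨by linarith, by linarith⟩
  have hAabs : |A| ≤ 2*N := by
    rw [hA, abs_le]; constructor <;> linarith
  have hab : a*b ≤ N := by
    calc a*b ≤ R*R := mul_le_mul haR hbR hb0 hR0
      _ = N := by rw [← hR2]; ring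
  have hab0 : (0:ℝ) ≤ a*b := mul_nonneg ha0 hb0
  have hNsq : N*N = N^2 := by ring
  have hA2 : A^2 ≤ 4*N^2 := by
    obtain ⟨hA1', hA2'⟩ := abs_le.mp hAabs
    have := sq_le_sq' hA1' hA2'
    calc A^2 ≤ (2*N)^2 := this
      _ = 4*N^2 := by ring
  have hnmN : (n:ℝ)*m ≤ N*N := mul_le_mul hNn hNm (by linarith) hN0.le
  have hklN : (k:ℝ)*l ≤ N*N := mul_le_mul hNk hNl (by linarith) hN0.le
  have hnm0 : (0:ℝ) ≤ (n:ℝ)*m := by positivity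
  have hkl0 : (0:ℝ) ≤ (k:ℝ)*l := by positivity
  have hBabs : |B| ≤ 12*N^2 := by
    rw [hB, abs_le]
    have hA20 : 0 ≤ A^2 := sq_nonneg A
    constructor <;> linarith
  have hzabs : |B - 4*A*(a*b)| ≤ 32*N^2 := by
    have h4 : |4*A*(a*b)| ≤ 8*N^2 := by
      rw [abs_mul, abs_mul, show |(4:ℝ)| = 4 by norm_num, abs_of_nonneg hab0]
      have hmul := mul_le_mul hAabs hab hab0 (by linarith : (0:ℝ) ≤ 2*N)
      linarith
    obtain ⟨hB1', hB2'⟩ := abs_le.mp hBabs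
    obtain ⟨h41', h42'⟩ := abs_le.mp h4
    rw [abs_le]
    constructor <;> linarith
  have hNN3 : N ≤ N^3 := by
    calc N = N^1 := (pow_one N).symm
      _ ≤ N^3 := pow_le_pow_right₀ hN1 (by norm_num)
  rw [hpow]
  by_cases hz : B - 4*A*(a*b) = 0
  · -- product = 2B, B nonzero integer
    have hBval : B + 4*A*(a*b) = 2*B := by linarith
    have hBne : B ≠ 0 := by
      intro h0; apply hprodne; rw [hBval, h0]; ring
    have hBZ : (((((n:ℤ)+m-k-l)^2 + 4*n*m - 4*k*l : ℤ)):ℝ) = B := by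
      push_cast [hB, hA]; ring
    have hBZne : (((n:ℤ)+m-k-l)^2 + 4*n*m - 4*k*l : ℤ) ≠ 0 := by
      intro h0; apply hBne; rw [← hBZ, h0]; norm_num
    have hB1 : 1 ≤ |B| := by
      rw [← hBZ, ← Int.cast_abs]
      exact_mod_cast Int.one_le_abs hBZne
    have key : 1 ≤ |a + b + σ*c - d| * (|a + b - σ*c + d| *
        (|a + b + σ*c + d| * |a + b - σ*c - d|)) := by
      have heq : |a + b + σ*c - d| * (|a + b - σ*c + d| * (|a + b + σ*c + d| *
          |a + b - σ*c - d|)) = |2*B| := by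
        rw [← abs_mul, ← abs_mul, ← abs_mul, hprod, hBval]
      rw [heq, abs_mul, show |(2:ℝ)| = 2 by norm_num]; linarith
    have hDbound : |a + b - σ*c + d| * (|a + b + σ*c + d| * |a + b - σ*c - d|)
        ≤ 2048 * (N^3 * R) := by
      have hu1 : |a + b + σ*c + d| * |a + b - σ*c - d| ≤ 4*R * (4*R) :=
        mul_le_mul habs2 habs3 (abs_nonneg _) (by positivity)
      have h64 : |a + b - σ*c + d| * (|a + b + σ*c + d| * |a + b - σ*c - d|)
          ≤ 4*R * (4*R * (4*R)) :=
        mul_le_mul habs1 hu1 (by positivity) (by positivity)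
      have hc1' : 4*R * (4*R * (4*R)) = 64*(R*N) := by
        calc 4*R * (4*R * (4*R)) = 64*(R*R^2) := by ring
          _ = 64*(R*N) := by rw [hR2]
      have hc2' : R*N ≤ R*N^3 := mul_le_mul_of_nonneg_left hNN3 hR0
      have hc3' : (0:ℝ) ≤ R*N^3 := by positivity
      calc |a + b - σ*c + d| * (|a + b + σ*c + d| * |a + b - σ*c - d|)
          ≤ 64*(R*N) := by rw [← hc1']; exact h64
        _ ≤ 64*(R*N^3) := by linarith
        _ ≤ 2048*(R*N^3) := by linarith
        _ = 2048 * (N^3 * R) := by ring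
    exact aux_bound _ _ _ (abs_nonneg _) key hDbound hT
  · -- product of everything = C, nonzero integer
    set C : ℝ := B^2 - 16*A^2*(n*m) with hC
    have hCval : (B + 4*A*(a*b)) * (B - 4*A*(a*b)) = C := by
      rw [hC, ← ha2, ← hb2]; ring
    have hCne : C ≠ 0 := by rw [← hCval]; exact mul_ne_zero hprodne hz
    have hCZ : (((((n:ℤ)+m-k-l)^2 + 4*n*m - 4*k*l)^2 - 16*((n:ℤ)+m-k-l)^2*(n*m)
        : ℤ) : ℝ) = C := by push_cast [hC, hB, hA]; ring
    have hCZne : ((((n:ℤ)+m-k-l)^2 + 4*n*m - 4*k*l)^2 -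
        16*((n:ℤ)+m-k-l)^2*(n*m) : ℤ) ≠ 0 := by
      intro h0; apply hCne; rw [← hCZ, h0]; norm_num
    have hC1 : 1 ≤ |C| := by
      rw [← hCZ, ← Int.cast_abs]
      exact_mod_cast Int.one_le_abs hCZne
    have key : 1 ≤ |a + b + σ*c - d| * (|a + b - σ*c + d| *
        (|a + b + σ*c + d| * (|a + b - σ*c - d| * |B - 4*A*(a*b)|))) := by
      have heq : |a + b + σ*c - d| * (|a + b - σ*c + d| * (|a + b + σ*c + d| *
          (|a + b - σ*c - d| * |B - 4*A*(a*b)|))) = |C| := by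
        rw [← abs_mul, ← abs_mul, ← abs_mul, ← abs_mul, ← hCval, ← hprod]
        congr 1; ring
      rw [heq]; exact hC1
    have hDbound : |a + b - σ*c + d| * (|a + b + σ*c + d| *
        (|a + b - σ*c - d| * |B - 4*A*(a*b)|)) ≤ 2048 * (N^3 * R) := by
      have hz0 : (0:ℝ) ≤ |B - 4*A*(a*b)| := abs_nonneg _
      have h1' : |a + b - σ*c - d| * |B - 4*A*(a*b)| ≤ 4*R * (32*N^2) :=
        mul_le_mul habs3 hzabs hz0 (by positivity)
      have h2' : |a + b + σ*c + d| * (|a + b - σ*c - d| * |B - 4*A*(a*b)|)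
          ≤ 4*R * (4*R * (32*N^2)) :=
        mul_le_mul habs2 h1' (by positivity) (by positivity)
      have h3' : |a + b - σ*c + d| * (|a + b + σ*c + d| *
          (|a + b - σ*c - d| * |B - 4*A*(a*b)|)) ≤ 4*R * (4*R * (4*R * (32*N^2))) :=
        mul_le_mul habs1 h2' (by positivity) (by positivity)
      have heq : 4*R * (4*R * (4*R * (32*N^2))) = 2048 * (N^3 * R) := by
        linear_combination (2048 * R * N^2) * hR2
      linarith [heq ▸ h3']
    exact aux_bound _ _ _ (abs_nonneg _) key hDbound hT
end

section
/- Let (a_r)_{r=1}^{R} and (b_s)_{s=1}^{S} be finite sequences of real numbers and let Δ > 0. Then #{(r,s) : |a_r − b_s| ≤ Δ} ≤ 3 · (#{(r,r') : |a_r − a_{r'}| ≤ Δ})^{1/2} · (#{(s,s') : |b_s − b_{s'}| ≤ Δ})^{1/2}, where (r,r') and (s,s') range over all ordered pairs of indices (including equal pairs). -/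
open Real Finset

lemma floor_eq_close {Δ x y : ℝ} (hΔ : 0 < Δ) (h : ⌊x/Δ⌋ = ⌊y/Δ⌋) : |x - y| ≤ Δ := by
  have hc : ((⌊x/Δ⌋ : ℤ) : ℝ) = ((⌊y/Δ⌋ : ℤ) : ℝ) := by exact_mod_cast h
  have hx1 := Int.floor_le (x/Δ)
  have hx2 := Int.lt_floor_add_one (x/Δ)
  have hy1 := Int.floor_le (y/Δ)
  have hy2 := Int.lt_floor_add_one (y/Δ)
  rw [abs_le]
  constructor
  · have h' : (y - x)/Δ < 1 := by rw [sub_div]; linarith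
    have := (div_lt_one hΔ).mp h'
    linarith
  · have h' : (x - y)/Δ < 1 := by rw [sub_div]; linarith
    have := (div_lt_one hΔ).mp h'
    linarith

lemma close_floor {Δ x y : ℝ} (hΔ : 0 < Δ) (h : |x - y| ≤ Δ) :
    ⌊x/Δ⌋ - ⌊y/Δ⌋ = -1 ∨ ⌊x/Δ⌋ - ⌊y/Δ⌋ = 0 ∨ ⌊x/Δ⌋ - ⌊y/Δ⌋ = 1 := by
  rw [abs_le] at h
  have h1 : x/Δ ≤ y/Δ + 1 := by
    rw [div_add' _ _ _ hΔ.ne', div_le_div_iff₀ hΔ hΔ]; nlinarith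
  have h2 : y/Δ ≤ x/Δ + 1 := by
    rw [div_add' _ _ _ hΔ.ne', div_le_div_iff₀ hΔ hΔ]; nlinarith
  have g1 : ⌊x/Δ⌋ ≤ ⌊y/Δ⌋ + 1 := by
    have := Int.floor_le_floor h1
    rwa [Int.floor_add_one] at this
  have g2 : ⌊y/Δ⌋ ≤ ⌊x/Δ⌋ + 1 := by
    have := Int.floor_le_floor h2
    rwa [Int.floor_add_one] at this
  omega

lemma cross_count {R S : ℕ} (fa : Fin R → ℤ) (fb : Fin S → ℤ) (j : ℤ) :
    (((Finset.univ : Finset (Fin R × Fin S)).filter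
        (fun p => fa p.1 = fb p.2 + j)).card : ℝ)
      = ∑ k ∈ Finset.image fb Finset.univ,
          (((Finset.univ : Finset (Fin R)).filter (fun r => fa r = k + j)).card : ℝ)
            * (((Finset.univ : Finset (Fin S)).filter (fun s => fb s = k)).card : ℝ) := by
  have hmap : ∀ p ∈ (Finset.univ : Finset (Fin R × Fin S)).filter
      (fun p => fa p.1 = fb p.2 + j), fb p.2 ∈ Finset.image fb Finset.univ := by
    intro p _; exact Finset.mem_image_of_mem _ (Finset.mem_univ _)
  rw [Finset.card_eq_sum_card_fiberwise hmap]
  push_cast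
  apply Finset.sum_congr rfl
  intro k _
  rw [Finset.filter_filter]
  have heq : ((Finset.univ : Finset (Fin R × Fin S)).filter
      (fun p => fa p.1 = fb p.2 + j ∧ fb p.2 = k))
      = ((Finset.univ : Finset (Fin R)).filter (fun r => fa r = k + j)) ×ˢ
        ((Finset.univ : Finset (Fin S)).filter (fun s => fb s = k)) := by
    ext p
    simp only [Finset.mem_filter, Finset.mem_product, Finset.mem_univ, true_and]
    omega
  rw [heq, Finset.card_product]
  push_cast; ring

lemma diag_count {n : ℕ} (f : Fin n → ℤ) (t : Finset ℤ) :
    (∑ k ∈ t, (((Finset.univ : Finset (Fin n)).filter (fun i => f i = k)).card : ℝ)^2)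
      ≤ (((Finset.univ : Finset (Fin n × Fin n)).filter
          (fun p => f p.1 = f p.2)).card : ℝ) := by
  have key : (((Finset.univ : Finset (Fin n × Fin n)).filter
      (fun p => f p.1 = f p.2)).card : ℝ)
      = ∑ k ∈ Finset.image f Finset.univ,
          (((Finset.univ : Finset (Fin n)).filter (fun i => f i = k)).card : ℝ)^2 := by
    have hmap : ∀ p ∈ (Finset.univ : Finset (Fin n × Fin n)).filter
        (fun p => f p.1 = f p.2), f p.2 ∈ Finset.image f Finset.univ := by
      intro p _; exact Finset.mem_image_of_mem _ (Finset.mem_univ _)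
    rw [Finset.card_eq_sum_card_fiberwise hmap]
    push_cast
    apply Finset.sum_congr rfl
    intro k _
    rw [Finset.filter_filter]
    have heq : ((Finset.univ : Finset (Fin n × Fin n)).filter
        (fun p => f p.1 = f p.2 ∧ f p.2 = k))
        = ((Finset.univ : Finset (Fin n)).filter (fun i => f i = k)) ×ˢ
          ((Finset.univ : Finset (Fin n)).filter (fun i => f i = k)) := by
      ext p
      simp only [Finset.mem_filter, Finset.mem_product, Finset.mem_univ, true_and]
      omega
    rw [heq, Finset.card_product]
    push_cast; ring
  rw [key]
  have h0 : ∀ k ∈ t, k ∉ Finset.image f Finset.univ →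
      (((Finset.univ : Finset (Fin n)).filter (fun i => f i = k)).card : ℝ)^2 = 0 := by
    intro k _ hk
    have he : (Finset.univ : Finset (Fin n)).filter (fun i => f i = k) = ∅ := by
      apply Finset.filter_eq_empty_iff.mpr
      intro i _ hfi
      exact hk (Finset.mem_image.mpr ⟨i, Finset.mem_univ _, hfi⟩)
    rw [he]; simp
  calc ∑ k ∈ t, (((Finset.univ : Finset (Fin n)).filter (fun i => f i = k)).card : ℝ)^2
      = ∑ k ∈ t.filter (· ∈ Finset.image f Finset.univ),
          (((Finset.univ : Finset (Fin n)).filter (fun i => f i = k)).card : ℝ)^2 := by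
        rw [Finset.sum_filter_of_ne]
        intro k hk hne
        by_contra hk'
        exact hne (h0 k hk hk')
    _ ≤ _ := Finset.sum_le_sum_of_subset_of_nonneg
        (fun k hk => (Finset.mem_filter.mp hk).2)
        (fun k _ _ => sq_nonneg _)

theorem pair_count_cauchy_schwarz
    (R S : ℕ) (a : Fin R → ℝ) (b : Fin S → ℝ) (Δ : ℝ) (hΔ : 0 < Δ) :
    (((Finset.univ : Finset (Fin R × Fin S)).filter
        (fun p => |a p.1 - b p.2| ≤ Δ)).card : ℝ)
      ≤ 3 * Real.sqrt (((Finset.univ : Finset (Fin R × Fin R)).filter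
            (fun p => |a p.1 - a p.2| ≤ Δ)).card)
          * Real.sqrt (((Finset.univ : Finset (Fin S × Fin S)).filter
            (fun p => |b p.1 - b p.2| ≤ Δ)).card) := by
  set fa : Fin R → ℤ := fun r => ⌊a r / Δ⌋ with hfa
  set fb : Fin S → ℤ := fun s => ⌊b s / Δ⌋ with hfb
  set Na : ℝ := (((Finset.univ : Finset (Fin R × Fin R)).filter
      (fun p => |a p.1 - a p.2| ≤ Δ)).card : ℝ) with hNa
  set Nb : ℝ := (((Finset.univ : Finset (Fin S × Fin S)).filter
      (fun p => |b p.1 - b p.2| ≤ Δ)).card : ℝ) with hNb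
  have step1 : (((Finset.univ : Finset (Fin R × Fin S)).filter
      (fun p => |a p.1 - b p.2| ≤ Δ)).card : ℝ)
      ≤ ∑ j ∈ ({-1, 0, 1} : Finset ℤ),
          (((Finset.univ : Finset (Fin R × Fin S)).filter
            (fun p => fa p.1 = fb p.2 + j)).card : ℝ) := by
    have hsub : ((Finset.univ : Finset (Fin R × Fin S)).filter
        (fun p => |a p.1 - b p.2| ≤ Δ))
        ⊆ ({-1,0,1} : Finset ℤ).biUnion (fun j =>
          (Finset.univ : Finset (Fin R × Fin S)).filter
            (fun p => fa p.1 = fb p.2 + j)) := by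
      intro p hp
      rw [Finset.mem_filter] at hp
      rw [Finset.mem_biUnion]
      have e1 : fa p.1 = ⌊a p.1 / Δ⌋ := rfl
      have e2 : fb p.2 = ⌊b p.2 / Δ⌋ := rfl
      rcases close_floor hΔ hp.2 with h | h | h
      · exact ⟨-1, by simp, Finset.mem_filter.mpr ⟨Finset.mem_univ _, by omega⟩⟩
      · exact ⟨0, by simp, Finset.mem_filter.mpr ⟨Finset.mem_univ _, by omega⟩⟩
      · exact ⟨1, by simp, Finset.mem_filter.mpr ⟨Finset.mem_univ _, by omega⟩⟩
    calc (((Finset.univ : Finset (Fin R × Fin S)).filter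
        (fun p => |a p.1 - b p.2| ≤ Δ)).card : ℝ)
        ≤ ((({-1,0,1} : Finset ℤ).biUnion (fun j =>
            (Finset.univ : Finset (Fin R × Fin S)).filter
              (fun p => fa p.1 = fb p.2 + j))).card : ℝ) := by
          exact_mod_cast Finset.card_le_card hsub
      _ ≤ _ := by
          exact_mod_cast Nat.cast_le.mpr Finset.card_biUnion_le
  refine le_trans step1 ?_
  have hterm : ∀ j ∈ ({-1, 0, 1} : Finset ℤ),
      (((Finset.univ : Finset (Fin R × Fin S)).filter
        (fun p => fa p.1 = fb p.2 + j)).card : ℝ) ≤ Real.sqrt Na * Real.sqrt Nb := by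
    intro j _
    rw [cross_count]
    set K := Finset.image fb Finset.univ with hK
    have hA : (∑ k ∈ K, (((Finset.univ : Finset (Fin R)).filter
        (fun r => fa r = k + j)).card : ℝ)^2) ≤ Na := by
      have hd := diag_count fa (K.image (· + j))
      have hinj : ∀ x ∈ K, ∀ y ∈ K, x + j = y + j → x = y := by
        intro x _ y _ h; omega
      have heq := (Finset.sum_image
        (f := fun k => (((Finset.univ : Finset (Fin R)).filter
          (fun r => fa r = k)).card : ℝ)^2)
        (g := fun k => k + j) hinj).symm
      rw [heq]
      refine le_trans hd ?_
      rw [hNa]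
      apply Nat.cast_le.mpr
      apply Finset.card_le_card
      intro p hp
      rw [Finset.mem_filter] at hp ⊢
      exact ⟨hp.1, floor_eq_close hΔ hp.2⟩
    have hB : (∑ k ∈ K, (((Finset.univ : Finset (Fin S)).filter
        (fun s => fb s = k)).card : ℝ)^2) ≤ Nb := by
      refine le_trans (diag_count fb K) ?_
      rw [hNb]
      apply Nat.cast_le.mpr
      apply Finset.card_le_card
      intro p hp
      rw [Finset.mem_filter] at hp ⊢
      exact ⟨hp.1, floor_eq_close hΔ hp.2⟩
    have hcs := Finset.sum_mul_sq_le_sq_mul_sq K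
        (fun k => (((Finset.univ : Finset (Fin R)).filter (fun r => fa r = k + j)).card : ℝ))
        (fun k => (((Finset.univ : Finset (Fin S)).filter (fun s => fb s = k)).card : ℝ))
    have hnn : (0:ℝ) ≤ ∑ k ∈ K,
        (((Finset.univ : Finset (Fin R)).filter (fun r => fa r = k + j)).card : ℝ)
          * (((Finset.univ : Finset (Fin S)).filter (fun s => fb s = k)).card : ℝ) :=
      Finset.sum_nonneg fun k _ => mul_nonneg (Nat.cast_nonneg _) (Nat.cast_nonneg _)
    have h1 : (∑ k ∈ K,
        (((Finset.univ : Finset (Fin R)).filter (fun r => fa r = k + j)).card : ℝ)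
          * (((Finset.univ : Finset (Fin S)).filter (fun s => fb s = k)).card : ℝ))
        ≤ Real.sqrt ((∑ k ∈ K, (((Finset.univ : Finset (Fin R)).filter
            (fun r => fa r = k + j)).card : ℝ)^2)
          * ∑ k ∈ K, (((Finset.univ : Finset (Fin S)).filter
            (fun s => fb s = k)).card : ℝ)^2) := by
      rw [← Real.sqrt_sq hnn]
      exact Real.sqrt_le_sqrt hcs
    refine le_trans h1 ?_
    rw [Real.sqrt_mul (Finset.sum_nonneg fun k _ => sq_nonneg _)]
    exact mul_le_mul (Real.sqrt_le_sqrt hA) (Real.sqrt_le_sqrt hB)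
      (Real.sqrt_nonneg _) (Real.sqrt_nonneg _)
  calc ∑ j ∈ ({-1, 0, 1} : Finset ℤ),
        (((Finset.univ : Finset (Fin R × Fin S)).filter
          (fun p => fa p.1 = fb p.2 + j)).card : ℝ)
      ≤ ∑ _j ∈ ({-1, 0, 1} : Finset ℤ), Real.sqrt Na * Real.sqrt Nb :=
        Finset.sum_le_sum hterm
    _ = 3 * Real.sqrt Na * Real.sqrt Nb := by
        rw [Finset.sum_const]
        norm_num
        ring
end

section
/- For all real N₁, N₂, N₃, N₄ ≥ 2 and all Δ > 0, the counting function 𝒜_−(N₁,N₂,N₃,N₄;Δ) := #{(n₁,n₂,n₃,n₄) ∈ ℕ⁴ : N_j < n_j ≤ 2N_j (j=1,2,3,4), |n₁^{1/2} + n₂^{1/2} − n₃^{1/2} − n₄^{1/2}| < Δ} satisfies 𝒜_−(N₁,N₂,N₃,N₄;Δ) ≤ 9 ∏_{j=1}^4 𝒜_−(N_j,N_j,N_j,N_j;Δ)^{1/4}. -/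
/-!
Pair the quadruples as `(n₁, n₃)` and `(n₂, n₄)` and put the differences `√n₁ - √n₃` and
`√n₂ - √n₄` into bins of width `Δ`. Two values in one bin are within `Δ` of each other, while
`|x + y| < Δ` forces the bins of `x` and `y` to sum to `-2`, `-1` or `0`. For each of these three
sums, Cauchy–Schwarz bounds the number of pairs by the geometric mean of the same-bin counts, and
those are counted by `Aminus` with repeated ranges. This gives
`Aminus N₁ N₂ N₃ N₄ Δ ^ 2 ≤ 9 * Aminus N₁ N₃ N₁ N₃ Δ * Aminus N₂ N₄ N₂ N₄ Δ`; applying it once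
more to both factors gives the theorem.
-/

open Real

/-- `Aminus N₁ N₂ N₃ N₄ Δ` counts quadruples of positive integers `(n₁,n₂,n₃,n₄)`
with `Nⱼ < nⱼ ≤ 2Nⱼ` and `|√n₁ + √n₂ − √n₃ − √n₄| < Δ`. -/
noncomputable def Aminus (N₁ N₂ N₃ N₄ Δ : ℝ) : ℕ :=
  Nat.card {q : ℕ × ℕ × ℕ × ℕ //
    (N₁ < q.1 ∧ (q.1 : ℝ) ≤ 2 * N₁) ∧ (N₂ < q.2.1 ∧ (q.2.1 : ℝ) ≤ 2 * N₂) ∧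
    (N₃ < q.2.2.1 ∧ (q.2.2.1 : ℝ) ≤ 2 * N₃) ∧ (N₄ < q.2.2.2 ∧ (q.2.2.2 : ℝ) ≤ 2 * N₄) ∧
    |Real.sqrt q.1 + Real.sqrt q.2.1 - Real.sqrt q.2.2.1 - Real.sqrt q.2.2.2| < Δ}

open Finset

section Binning

variable {Δ a b : ℝ}

theorem abs_sub_lt_of_floor_div_eq (hΔ : 0 < Δ) (h : ⌊a / Δ⌋ = ⌊b / Δ⌋) : |a - b| < Δ := by
  have h1 := Int.abs_sub_lt_one_of_floor_eq_floor h
  rwa [← sub_div, abs_div, abs_of_pos hΔ, div_lt_one hΔ] at h1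

theorem floor_div_add_floor_div_mem_Icc (hΔ : 0 < Δ) (h : |a + b| < Δ) :
    ⌊a / Δ⌋ + ⌊b / Δ⌋ ∈ Icc (-2 : ℤ) 0 := by
  have hab : |a / Δ + b / Δ| < 1 := by
    rwa [← add_div, abs_div, abs_of_pos hΔ, div_lt_one hΔ]
  obtain ⟨hlo, hhi⟩ := abs_lt.mp hab
  have hfloor_lo : -1 ≤ ⌊a / Δ + b / Δ⌋ := Int.le_floor.mpr (by exact_mod_cast hlo.le)
  have hfloor_hi : ⌊a / Δ + b / Δ⌋ < 1 := Int.floor_lt.mpr (by exact_mod_cast hhi)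
  have := Int.le_floor_add (a / Δ) (b / Δ)
  have := Int.le_floor_add_floor (a / Δ) (b / Δ)
  rw [mem_Icc]
  omega

end Binning

section Collisions

variable {α β : Type*} (P : Finset α) (Q : Finset β)

theorem card_filter_add_eq_sum (u : α → ℤ) (v : β → ℤ) (m : ℤ) :
    #{x ∈ P ×ˢ Q | u x.1 + v x.2 = m} =
      ∑ k ∈ P.image u, #{p ∈ P | u p = k} * #{q ∈ Q | v q = m - k} := by
  have hrow : ∀ p ∈ P, #{q ∈ Q | u p + v q = m} = #{q ∈ Q | v q = m - u p} := fun p _ => by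
    congr 1; ext q; simp only [mem_filter, eq_sub_iff_add_eq, add_comm (v q)]
  rw [card_filter, sum_product]
  simp only [← card_filter]
  rw [sum_congr rfl hrow, sum_comp (fun k => #{q ∈ Q | v q = m - k}) u]
  simp only [smul_eq_mul]

theorem sum_card_fiber_sq (u : α → ℤ) :
    ∑ k ∈ P.image u, #{p ∈ P | u p = k} ^ 2 = #{x ∈ P ×ˢ P | u x.1 = u x.2} := by
  rw [card_filter, sum_product]
  simp only [← card_filter]
  rw [sum_comp (fun k => #{p ∈ P | k = u p}) u]
  refine sum_congr rfl fun k _ => ?_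
  simp only [sq, smul_eq_mul, eq_comm (a := k)]

theorem sum_card_fiber_sub_sq_le (v : β → ℤ) (K : Finset ℤ) (m : ℤ) :
    ∑ k ∈ K, #{q ∈ Q | v q = m - k} ^ 2 ≤ ∑ l ∈ Q.image v, #{q ∈ Q | v q = l} ^ 2 := by
  rw [← sum_image (f := fun l => #{q ∈ Q | v q = l} ^ 2) sub_right_injective.injOn]
  refine sum_le_sum_of_ne_zero fun l _ hl => ?_
  obtain ⟨q, hq⟩ := card_pos.mp (Nat.pos_of_ne_zero (pow_ne_zero_iff two_ne_zero |>.mp hl))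
  rw [mem_filter] at hq
  exact mem_image.mpr ⟨q, hq.1, hq.2⟩

theorem card_filter_add_eq_sq_le (u : α → ℤ) (v : β → ℤ) (m : ℤ) :
    #{x ∈ P ×ˢ Q | u x.1 + v x.2 = m} ^ 2 ≤
      #{x ∈ P ×ˢ P | u x.1 = u x.2} * #{x ∈ Q ×ˢ Q | v x.1 = v x.2} := by
  rw [card_filter_add_eq_sum, ← sum_card_fiber_sq, ← sum_card_fiber_sq]
  exact (sum_mul_sq_le_sq_mul_sq _ _ _).trans
    (Nat.mul_le_mul_left _ (sum_card_fiber_sub_sq_le Q v _ m))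

theorem card_abs_add_lt_sq_le (f : α → ℝ) (g : β → ℝ) {Δ : ℝ} (hΔ : 0 < Δ) :
    #{x ∈ P ×ˢ Q | |f x.1 + g x.2| < Δ} ^ 2 ≤
      9 * #{x ∈ P ×ˢ P | |f x.1 - f x.2| < Δ} * #{x ∈ Q ×ˢ Q | |g x.1 - g x.2| < Δ} := by
  set u : α → ℤ := fun p => ⌊f p / Δ⌋
  set v : β → ℤ := fun q => ⌊g q / Δ⌋
  have hbins : #{x ∈ P ×ˢ Q | |f x.1 + g x.2| < Δ} ≤
      ∑ m ∈ Icc (-2 : ℤ) 0, #{x ∈ P ×ˢ Q | u x.1 + v x.2 = m} := by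
    rw [card_eq_sum_card_fiberwise (f := fun x : α × β => u x.1 + v x.2) (t := Icc (-2) 0)
      fun x hx => floor_div_add_floor_div_mem_Icc hΔ (mem_filter.mp hx).2]
    exact sum_le_sum fun m _ => card_le_card (filter_subset_filter _ (filter_subset _ _))
  calc #{x ∈ P ×ˢ Q | |f x.1 + g x.2| < Δ} ^ 2
      ≤ (∑ m ∈ Icc (-2 : ℤ) 0, #{x ∈ P ×ˢ Q | u x.1 + v x.2 = m}) ^ 2 := by gcongr
    _ ≤ 3 * ∑ m ∈ Icc (-2 : ℤ) 0, #{x ∈ P ×ˢ Q | u x.1 + v x.2 = m} ^ 2 :=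
        sq_sum_le_card_mul_sum_sq
    _ ≤ 3 * ∑ m ∈ Icc (-2 : ℤ) 0,
          #{x ∈ P ×ˢ P | u x.1 = u x.2} * #{x ∈ Q ×ˢ Q | v x.1 = v x.2} := by
        gcongr with m; exact card_filter_add_eq_sq_le P Q u v m
    _ = 9 * #{x ∈ P ×ˢ P | u x.1 = u x.2} * #{x ∈ Q ×ˢ Q | v x.1 = v x.2} := by
        rw [sum_const, show #(Icc (-2 : ℤ) 0) = 3 from rfl, smul_eq_mul]
        ring
    _ ≤ 9 * #{x ∈ P ×ˢ P | |f x.1 - f x.2| < Δ} * #{x ∈ Q ×ˢ Q | |g x.1 - g x.2| < Δ} := by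
        gcongr <;> exact abs_sub_lt_of_floor_div_eq hΔ

end Collisions

noncomputable def dyadicBox (N : ℝ) : Finset ℕ :=
  {n ∈ range (⌊2 * N⌋₊ + 1) | N < n ∧ (n : ℝ) ≤ 2 * N}

theorem mem_dyadicBox {N : ℝ} {n : ℕ} : n ∈ dyadicBox N ↔ N < n ∧ (n : ℝ) ≤ 2 * N := by
  rw [dyadicBox, mem_filter, mem_range, and_iff_right_iff_imp]
  exact fun h => Nat.lt_succ_of_le (Nat.le_floor h.2)

noncomputable def sqrtDiff (p : ℕ × ℕ) : ℝ := √p.1 - √p.2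

theorem Aminus_eq_card_add (N₁ N₂ N₃ N₄ Δ : ℝ) :
    Aminus N₁ N₂ N₃ N₄ Δ = #{x ∈ (dyadicBox N₁ ×ˢ dyadicBox N₃) ×ˢ (dyadicBox N₂ ×ˢ dyadicBox N₄) |
      |sqrtDiff x.1 + sqrtDiff x.2| < Δ} := by
  rw [Aminus, ← Nat.card_eq_finsetCard]
  refine Nat.card_congr <| Equiv.subtypeEquiv
    ⟨fun q => ((q.1, q.2.2.1), (q.2.1, q.2.2.2)), fun x => (x.1.1, x.2.1, x.1.2, x.2.2),
      fun _ => rfl, fun _ => rfl⟩ fun q => ?_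
  simp only [Equiv.coe_fn_mk, mem_filter, mem_product, mem_dyadicBox]
  simp only [sqrtDiff]
  rw [show √q.1 - √q.2.2.1 + (√q.2.1 - √q.2.2.2) = √q.1 + √q.2.1 - √q.2.2.1 - √q.2.2.2 by ring]
  tauto

theorem Aminus_eq_card_sub (N₁ N₂ N₃ N₄ Δ : ℝ) :
    Aminus N₁ N₂ N₃ N₄ Δ = #{x ∈ (dyadicBox N₁ ×ˢ dyadicBox N₄) ×ˢ (dyadicBox N₃ ×ˢ dyadicBox N₂) |
      |sqrtDiff x.1 - sqrtDiff x.2| < Δ} := by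
  rw [Aminus, ← Nat.card_eq_finsetCard]
  refine Nat.card_congr <| Equiv.subtypeEquiv
    ⟨fun q => ((q.1, q.2.2.2), (q.2.2.1, q.2.1)), fun x => (x.1.1, x.2.2, x.2.1, x.1.2),
      fun _ => rfl, fun _ => rfl⟩ fun q => ?_
  simp only [Equiv.coe_fn_mk, mem_filter, mem_product, mem_dyadicBox]
  simp only [sqrtDiff]
  rw [show √q.1 - √q.2.2.2 - (√q.2.2.1 - √q.2.1) = √q.1 + √q.2.1 - √q.2.2.1 - √q.2.2.2 by ring]
  tauto

theorem Aminus_sq_le (N₁ N₂ N₃ N₄ : ℝ) {Δ : ℝ} (hΔ : 0 < Δ) :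
    Aminus N₁ N₂ N₃ N₄ Δ ^ 2 ≤ 9 * Aminus N₁ N₃ N₁ N₃ Δ * Aminus N₂ N₄ N₂ N₄ Δ := by
  rw [Aminus_eq_card_add, Aminus_eq_card_sub N₁ N₃ N₁ N₃, Aminus_eq_card_sub N₂ N₄ N₂ N₄]
  exact card_abs_add_lt_sq_le _ _ sqrtDiff sqrtDiff hΔ

theorem Aminus_pow_four_le (N₁ N₂ N₃ N₄ : ℝ) {Δ : ℝ} (hΔ : 0 < Δ) :
    Aminus N₁ N₂ N₃ N₄ Δ ^ 4 ≤ 9 ^ 4 * Aminus N₁ N₁ N₁ N₁ Δ * Aminus N₂ N₂ N₂ N₂ Δ *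
      Aminus N₃ N₃ N₃ N₃ Δ * Aminus N₄ N₄ N₄ N₄ Δ :=
  calc Aminus N₁ N₂ N₃ N₄ Δ ^ 4 = (Aminus N₁ N₂ N₃ N₄ Δ ^ 2) ^ 2 := by ring
    _ ≤ (9 * Aminus N₁ N₃ N₁ N₃ Δ * Aminus N₂ N₄ N₂ N₄ Δ) ^ 2 := by
        gcongr; exact Aminus_sq_le _ _ _ _ hΔ
    _ = 81 * Aminus N₁ N₃ N₁ N₃ Δ ^ 2 * Aminus N₂ N₄ N₂ N₄ Δ ^ 2 := by ring
    _ ≤ 81 * (9 * Aminus N₁ N₁ N₁ N₁ Δ * Aminus N₃ N₃ N₃ N₃ Δ) *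
          (9 * Aminus N₂ N₂ N₂ N₂ Δ * Aminus N₄ N₄ N₄ N₄ Δ) := by
        gcongr <;> exact Aminus_sq_le _ _ _ _ hΔ
    _ = _ := by ring

theorem Aminus_le_prod_general (N₁ N₂ N₃ N₄ : ℝ) (Δ : ℝ) (hΔ : 0 < Δ) :
    (Aminus N₁ N₂ N₃ N₄ Δ : ℝ) ≤
      9 * (Aminus N₁ N₁ N₁ N₁ Δ : ℝ) ^ ((1:ℝ)/4) * (Aminus N₂ N₂ N₂ N₂ Δ : ℝ) ^ ((1:ℝ)/4)
        * (Aminus N₃ N₃ N₃ N₃ Δ : ℝ) ^ ((1:ℝ)/4) * (Aminus N₄ N₄ N₄ N₄ Δ : ℝ) ^ ((1:ℝ)/4) := by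
  have hroot (n : ℕ) : ((n : ℝ) ^ ((1:ℝ)/4)) ^ 4 = n := by
    rw [← Real.rpow_natCast, ← Real.rpow_mul (Nat.cast_nonneg n)]
    norm_num
  refine (pow_le_pow_iff_left₀ (Nat.cast_nonneg _) (by positivity) four_ne_zero).mp ?_
  calc (Aminus N₁ N₂ N₃ N₄ Δ : ℝ) ^ 4
      ≤ 9 ^ 4 * Aminus N₁ N₁ N₁ N₁ Δ * Aminus N₂ N₂ N₂ N₂ Δ * Aminus N₃ N₃ N₃ N₃ Δ *
          Aminus N₄ N₄ N₄ N₄ Δ := by exact_mod_cast Aminus_pow_four_le N₁ N₂ N₃ N₄ hΔ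
    _ = _ := by simp only [mul_pow, hroot]

theorem Aminus_le_prod (N₁ N₂ N₃ N₄ : ℝ) (h₁ : 2 ≤ N₁) (h₂ : 2 ≤ N₂)
    (h₃ : 2 ≤ N₃) (h₄ : 2 ≤ N₄) (Δ : ℝ) (hΔ : 0 < Δ) :
    (Aminus N₁ N₂ N₃ N₄ Δ : ℝ) ≤
      9 * (Aminus N₁ N₁ N₁ N₁ Δ : ℝ) ^ ((1:ℝ)/4) * (Aminus N₂ N₂ N₂ N₂ Δ : ℝ) ^ ((1:ℝ)/4)
        * (Aminus N₃ N₃ N₃ N₃ Δ : ℝ) ^ ((1:ℝ)/4) * (Aminus N₄ N₄ N₄ N₄ Δ : ℝ) ^ ((1:ℝ)/4) :=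
  Aminus_le_prod_general N₁ N₂ N₃ N₄ Δ hΔ
end

section
/- If n, m, k, l are positive integers with √n + √m = √k + √l, then n + m + k + l is an even number. -/
open Real

/-!
Squaring gives `n + m + 2√(nm) = k + l + 2√(kl)`, so `√(nm) - √(kl)` is the rational number
`((k + l) - (n + m)) / 2`. A difference of square roots of naturals that is rational is an
integer: if it is nonzero, the sum `√(nm) + √(kl)` is rational as well, hence so are both roots,
and a rational square root of a natural number is a natural number.
-/

lemma sqrt_add_sqrt_sq {x y : ℝ} (hx : 0 ≤ x) (hy : 0 ≤ y) :
    (√x + √y) ^ 2 = x + y + 2 * √(x * y) := by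
  rw [add_sq, sq_sqrt hx, sq_sqrt hy, sqrt_mul hx]
  ring

lemma exists_natCast_eq_sqrt_of_ratCast {a : ℕ} {q : ℚ} (h : √a = q) : ∃ s : ℕ, √a = s := by
  have hsq : IsSquare a := by
    by_contra hna
    exact (irrational_sqrt_natCast_iff.mpr hna).ne_rat q h
  obtain ⟨s, rfl⟩ := hsq
  exact ⟨s, by push_cast; exact sqrt_mul_self s.cast_nonneg⟩

lemma exists_intCast_eq_of_sqrt_sub_sqrt_eq_ratCast {a b : ℕ} {q : ℚ} (h : √a - √b = q) :
    ∃ z : ℤ, q = z := by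
  rcases eq_or_ne q 0 with rfl | hq
  · exact ⟨0, rfl⟩
  have hsum : √a + √b = (a - b : ℝ) / q := by
    have hdiff : (√a + √b) * (√a - √b) = (a : ℝ) - b := by
      rw [← sq_sub_sq, sq_sqrt a.cast_nonneg, sq_sqrt b.cast_nonneg]
    rw [h] at hdiff
    rw [eq_div_iff (by exact_mod_cast hq), hdiff]
  obtain ⟨s, hs⟩ := exists_natCast_eq_sqrt_of_ratCast (a := a) (q := ((a - b) / q + q) / 2)
    (by push_cast; linarith)
  obtain ⟨t, ht⟩ := exists_natCast_eq_sqrt_of_ratCast (a := b) (q := ((a - b) / q - q) / 2)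
    (by push_cast; linarith)
  refine ⟨s - t, ?_⟩
  exact_mod_cast (show (q : ℝ) = ((s - t : ℤ) : ℝ) by push_cast; rw [← hs, ← ht, h])

theorem even_sum_of_sqrt_eq_general (n m k l : ℕ)
    (h : Real.sqrt n + Real.sqrt m = Real.sqrt k + Real.sqrt l) :
    Even (n + m + k + l) := by
  have hsq : (n + m : ℝ) + 2 * √(n * m) = (k + l : ℝ) + 2 * √(k * l) := by
    rw [← sqrt_add_sqrt_sq n.cast_nonneg m.cast_nonneg,
      ← sqrt_add_sqrt_sq k.cast_nonneg l.cast_nonneg, h]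
  have hdiff : √((n * m : ℕ) : ℝ) - √((k * l : ℕ) : ℝ) = (((k + l - n - m : ℤ) / 2 : ℚ) : ℝ) := by
    push_cast
    linarith
  obtain ⟨z, hz⟩ := exists_intCast_eq_of_sqrt_sub_sqrt_eq_ratCast hdiff
  have hd : (k + l - n - m : ℤ) = 2 * z := by
    have : ((k + l - n - m : ℤ) : ℚ) = 2 * z := by linarith
    exact_mod_cast this
  refine (Int.even_coe_nat _).mp ⟨n + m + z, ?_⟩
  push_cast
  linarith

theorem even_sum_of_sqrt_eq (n m k l : ℕ) (hn : 0 < n) (hm : 0 < m)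
    (hk : 0 < k) (hl : 0 < l)
    (h : Real.sqrt n + Real.sqrt m = Real.sqrt k + Real.sqrt l) :
    Even (n + m + k + l) :=
  even_sum_of_sqrt_eq_general n m k l h
end

section
/- Let n, m, k, l be positive integers with √n + √m = √k + √l and n ≠ k, n ≠ l. Then there exist a squarefree positive integer h and positive integers n₁, m₁, k₁, l₁ such that n = n₁² h, m = m₁² h, k = k₁² h, l = l₁² h and n₁ + m₁ = k₁ + l₁. -/
open Real

private lemma aux_sqf_eq {a b x y : ℕ} (ha : Squarefree a) (hb : Squarefree b)
    (hx : x ≠ 0) (hy : y ≠ 0) (h : x ^ 2 * a = y ^ 2 * b) : a = b := by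
  have ha0 : a ≠ 0 := ha.ne_zero
  have hb0 : b ≠ 0 := hb.ne_zero
  refine Nat.eq_of_factorization_eq ha0 hb0 fun p => ?_
  have h1 : a.factorization p ≤ 1 := (Nat.squarefree_iff_factorization_le_one ha0).mp ha p
  have h2 : b.factorization p ≤ 1 := (Nat.squarefree_iff_factorization_le_one hb0).mp hb p
  have e := congrArg (fun z => z.factorization p) h
  simp only [Nat.factorization_mul (pow_ne_zero 2 hx) ha0,
    Nat.factorization_mul (pow_ne_zero 2 hy) hb0, Nat.factorization_pow,
    Finsupp.coe_add, Finsupp.coe_smul, Pi.add_apply, Pi.smul_apply, smul_eq_mul] at e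
  omega

private lemma aux_sqf_eq_of_sq {a b x r : ℕ} (ha : Squarefree a) (hb : Squarefree b)
    (hx : x ≠ 0) (h : x ^ 2 * (a * b) = r ^ 2) : a = b := by
  have ha0 : a ≠ 0 := ha.ne_zero
  have hb0 : b ≠ 0 := hb.ne_zero
  refine Nat.eq_of_factorization_eq ha0 hb0 fun p => ?_
  have h1 : a.factorization p ≤ 1 := (Nat.squarefree_iff_factorization_le_one ha0).mp ha p
  have h2 : b.factorization p ≤ 1 := (Nat.squarefree_iff_factorization_le_one hb0).mp hb p
  have e := congrArg (fun z => z.factorization p) h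
  simp only [Nat.factorization_mul (pow_ne_zero 2 hx) (mul_ne_zero ha0 hb0),
    Nat.factorization_mul ha0 hb0, Nat.factorization_pow,
    Finsupp.coe_add, Finsupp.coe_smul, Pi.add_apply, Pi.smul_apply, smul_eq_mul] at e
  omega

theorem besicovitch_structure (n m k l : ℕ) (hn : 0 < n) (hm : 0 < m)
    (hk : 0 < k) (hl : 0 < l)
    (h : Real.sqrt n + Real.sqrt m = Real.sqrt k + Real.sqrt l)
    (hnk : n ≠ k) (hnl : n ≠ l) :
    ∃ h₀ n₁ m₁ k₁ l₁ : ℕ, 0 < h₀ ∧ Squarefree h₀ ∧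
      0 < n₁ ∧ 0 < m₁ ∧ 0 < k₁ ∧ 0 < l₁ ∧
      n = n₁ ^ 2 * h₀ ∧ m = m₁ ^ 2 * h₀ ∧ k = k₁ ^ 2 * h₀ ∧ l = l₁ ^ 2 * h₀ ∧
      n₁ + m₁ = k₁ + l₁ := by
  -- step A : squared identity
  have e1 : (Real.sqrt n + Real.sqrt m) ^ 2 = (n : ℝ) + m + 2 * Real.sqrt ((n : ℝ) * m) := by
    rw [add_sq, Real.sq_sqrt (Nat.cast_nonneg n), Real.sq_sqrt (Nat.cast_nonneg m),
      Real.sqrt_mul (Nat.cast_nonneg n)]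
    ring
  have e2 : (Real.sqrt k + Real.sqrt l) ^ 2 = (k : ℝ) + l + 2 * Real.sqrt ((k : ℝ) * l) := by
    rw [add_sq, Real.sq_sqrt (Nat.cast_nonneg k), Real.sq_sqrt (Nat.cast_nonneg l),
      Real.sqrt_mul (Nat.cast_nonneg k)]
    ring
  have key : (n : ℝ) + m + 2 * Real.sqrt ((n : ℝ) * m)
      = (k : ℝ) + l + 2 * Real.sqrt ((k : ℝ) * l) := by
    rw [← e1, ← e2, h]
  have pnm : Real.sqrt ((n : ℝ) * m) ^ 2 = (n : ℝ) * m :=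
    Real.sq_sqrt (by positivity)
  have pkl : Real.sqrt ((k : ℝ) * l) ^ 2 = (k : ℝ) * l :=
    Real.sq_sqrt (by positivity)
  -- step B : n*m and k*l are perfect squares
  have hsq : IsSquare (n * m) ∧ IsSquare (k * l) := by
    by_cases hpq : Real.sqrt ((n : ℝ) * m) = Real.sqrt ((k : ℝ) * l)
    · exfalso
      have hmul : (n : ℝ) * m = (k : ℝ) * l := by rw [← pnm, ← pkl, hpq]
      have hadd : (n : ℝ) + m = (k : ℝ) + l := by rw [hpq] at key; linarith
      have hmulz : (n : ℤ) * m = (k : ℤ) * l := by exact_mod_cast hmul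
      have haddz : (n : ℤ) + m = (k : ℤ) + l := by exact_mod_cast hadd
      have : ((n : ℤ) - k) * ((n : ℤ) - l) = 0 := by linear_combination (n : ℤ) * haddz - hmulz
      rcases mul_eq_zero.mp this with h0 | h0
      · exact hnk (by omega)
      · exact hnl (by omega)
    · have hpqne : Real.sqrt ((n : ℝ) * m) - Real.sqrt ((k : ℝ) * l) ≠ 0 :=
        sub_ne_zero_of_ne hpq
      have hc : Real.sqrt ((n : ℝ) * m) - Real.sqrt ((k : ℝ) * l)
          = ((k : ℝ) + l - n - m) / 2 := by linarith
      have hCne : ((k : ℝ) + l - n - m) / 2 ≠ 0 := hc ▸ hpqne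
      have hsum2 : (Real.sqrt ((n : ℝ) * m) + Real.sqrt ((k : ℝ) * l))
          * (((k : ℝ) + l - n - m) / 2) = (n : ℝ) * m - (k : ℝ) * l := by
        have h0 : (Real.sqrt ((n : ℝ) * m) + Real.sqrt ((k : ℝ) * l))
            * (Real.sqrt ((n : ℝ) * m) - Real.sqrt ((k : ℝ) * l))
            = (n : ℝ) * m - (k : ℝ) * l := by linear_combination pnm - pkl
        linear_combination h0 - (Real.sqrt ((n : ℝ) * m) + Real.sqrt ((k : ℝ) * l)) * hc
      have h2Cne : 2 * (((k : ℝ) + l - n - m) / 2) ≠ 0 := by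
        exact mul_ne_zero two_ne_zero hCne
      have hPval : Real.sqrt ((n : ℝ) * m)
          = ((n : ℝ) * m - (k : ℝ) * l + (((k : ℝ) + l - n - m) / 2) ^ 2)
            / (2 * (((k : ℝ) + l - n - m) / 2)) := by
        rw [eq_div_iff h2Cne]
        linear_combination hsum2 + (((k : ℝ) + l - n - m) / 2) * hc
      have hQval : Real.sqrt ((k : ℝ) * l)
          = ((n : ℝ) * m - (k : ℝ) * l - (((k : ℝ) + l - n - m) / 2) ^ 2)
            / (2 * (((k : ℝ) + l - n - m) / 2)) := by
        rw [eq_div_iff h2Cne]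
        linear_combination hsum2 - (((k : ℝ) + l - n - m) / 2) * hc
      constructor
      · by_contra hns
        have hirr : Irrational (Real.sqrt ((n * m : ℕ) : ℝ)) :=
          irrational_sqrt_natCast_iff.mpr hns
        apply hirr
        refine ⟨((n : ℚ) * m - (k : ℚ) * l + (((k : ℚ) + l - n - m) / 2) ^ 2)
            / (2 * (((k : ℚ) + l - n - m) / 2)), ?_⟩
        rw [show (((n * m : ℕ) : ℝ)) = (n : ℝ) * m by push_cast; ring, hPval]
        push_cast
        ring
      · by_contra hns
        have hirr : Irrational (Real.sqrt ((k * l : ℕ) : ℝ)) :=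
          irrational_sqrt_natCast_iff.mpr hns
        apply hirr
        refine ⟨((n : ℚ) * m - (k : ℚ) * l - (((k : ℚ) + l - n - m) / 2) ^ 2)
            / (2 * (((k : ℚ) + l - n - m) / 2)), ?_⟩
        rw [show (((k * l : ℕ) : ℝ)) = (k : ℝ) * l by push_cast; ring, hQval]
        push_cast
        ring
  obtain ⟨⟨r, hr⟩, ⟨t, ht⟩⟩ := hsq
  -- convert key to natural numbers
  have hsr : Real.sqrt ((n : ℝ) * m) = (r : ℝ) := by
    rw [show (n : ℝ) * m = (r : ℝ) * r by exact_mod_cast congrArg (Nat.cast (R := ℝ)) hr]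
    exact Real.sqrt_mul_self (Nat.cast_nonneg r)
  have hst : Real.sqrt ((k : ℝ) * l) = (t : ℝ) := by
    rw [show (k : ℝ) * l = (t : ℝ) * t by exact_mod_cast congrArg (Nat.cast (R := ℝ)) ht]
    exact Real.sqrt_mul_self (Nat.cast_nonneg t)
  have keyN : n + m + 2 * r = k + l + 2 * t := by
    have : (n : ℝ) + m + 2 * r = (k : ℝ) + l + 2 * t := by rw [← hsr, ← hst]; exact key
    exact_mod_cast this
  -- step C : squarefree decompositions
  obtain ⟨a, x, hapos, hxpos, hax, ha⟩ := Nat.sq_mul_squarefree_of_pos hn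
  obtain ⟨b, y, hbpos, hypos, hby, hb⟩ := Nat.sq_mul_squarefree_of_pos hm
  obtain ⟨e, u, hepos, hupos, heu, he⟩ := Nat.sq_mul_squarefree_of_pos hk
  obtain ⟨f, v, hfpos, hvpos, hfv, hf⟩ := Nat.sq_mul_squarefree_of_pos hl
  have hab : a = b := by
    apply aux_sqf_eq_of_sq ha hb (x := x * y) (r := r)
      (by exact Nat.mul_ne_zero hxpos.ne' hypos.ne')
    calc (x * y) ^ 2 * (a * b) = (x ^ 2 * a) * (y ^ 2 * b) := by ring
      _ = n * m := by rw [hax, hby]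
      _ = r ^ 2 := by rw [hr]; ring
  have hef : e = f := by
    apply aux_sqf_eq_of_sq he hf (x := u * v) (r := t)
      (by exact Nat.mul_ne_zero hupos.ne' hvpos.ne')
    calc (u * v) ^ 2 * (e * f) = (u ^ 2 * e) * (v ^ 2 * f) := by ring
      _ = k * l := by rw [heu, hfv]
      _ = t ^ 2 := by rw [ht]; ring
  subst hab hef
  -- identify r and t
  have hrval : r = x * y * a := by
    apply Nat.pow_left_injective (n := 2) two_ne_zero
    show r ^ 2 = (x * y * a) ^ 2
    calc r ^ 2 = n * m := by rw [hr]; ring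
      _ = (x ^ 2 * a) * (y ^ 2 * a) := by rw [hax, hby]
      _ = (x * y * a) ^ 2 := by ring
  have htval : t = u * v * e := by
    apply Nat.pow_left_injective (n := 2) two_ne_zero
    show t ^ 2 = (u * v * e) ^ 2
    calc t ^ 2 = k * l := by rw [ht]; ring
      _ = (u ^ 2 * e) * (v ^ 2 * e) := by rw [heu, hfv]
      _ = (u * v * e) ^ 2 := by ring
  have hmain : (x + y) ^ 2 * a = (u + v) ^ 2 * e := by
    calc (x + y) ^ 2 * a = x ^ 2 * a + y ^ 2 * a + 2 * (x * y * a) := by ring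
      _ = n + m + 2 * r := by rw [hax, hby, hrval]
      _ = k + l + 2 * t := keyN
      _ = u ^ 2 * e + v ^ 2 * e + 2 * (u * v * e) := by rw [heu, hfv, htval]
      _ = (u + v) ^ 2 * e := by ring
  have hae : a = e := by
    apply aux_sqf_eq ha he (x := x + y) (y := u + v) (by omega) (by omega) hmain
  subst hae
  have hsumeq : x + y = u + v := by
    have h2 : (x + y) ^ 2 = (u + v) ^ 2 :=
      Nat.eq_of_mul_eq_mul_right hapos hmain
    exact Nat.pow_left_injective two_ne_zero h2
  exact ⟨a, x, y, u, v, hapos, ha, hxpos, hypos, hupos, hvpos,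
    hax.symm, hby.symm, heu.symm, hfv.symm, hsumeq⟩
end

section
/- For every ε > 0 there exists a constant C > 0 such that for all real Y > 1, H₁(Y) := Σ (nmkl)^{-3/4} d(n)d(m)d(k)d(l) max(n,m,k,l)³ ≤ C Y^{5/2+ε}, where the sum is over all quadruples of positive integers (n,m,k,l) with n, m, k, l ≤ Y and √n + √m = √k + √l. -/
open Real

/-- `d n` is the number of positive divisors of `n`. -/
noncomputable def d (n : ℕ) : ℝ := n.divisors.card

/-- `H₁ Y` is the sum of `d(n)d(m)d(k)d(l) max(n,m,k,l)³ / (nmkl)^{3/4}` over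
quadruples of positive integers `n,m,k,l ≤ Y` with `√n + √m = √k + √l`. -/
noncomputable def H₁ (Y : ℝ) : ℝ :=
  ∑ n ∈ Finset.Icc 1 ⌊Y⌋₊, ∑ m ∈ Finset.Icc 1 ⌊Y⌋₊,
    ∑ k ∈ Finset.Icc 1 ⌊Y⌋₊, ∑ l ∈ Finset.Icc 1 ⌊Y⌋₊,
      if Real.sqrt n + Real.sqrt m = Real.sqrt k + Real.sqrt l then
        d n * d m * d k * d l * (max (max n m) (max k l) : ℝ) ^ 3
          / ((n * m * k * l : ℕ) : ℝ) ^ ((3:ℝ)/4)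
      else 0

/-!
Squaring `√n + √m = √k + √l` shows that `√(nm) - √(kl)` is rational. Either it vanishes, and then
`{k, l} = {n, m}`, or `nm` and `kl` are perfect squares, and then `n, m, k, l = a²t, b²t, c²t, e²t`
share one squarefree kernel `t`.

On a solution every entry is at most `(√n + √m)² = (√k + √l)²`, so the weight
`max(n,m,k,l)³ / (nmkl)^{3/4}` is at most `16 β(n,m) β(k,l)`, where `β = balance (3/4)` and
`balance s x y = (x/y)^s + (y/x)^s`. The diagonal solutions contribute
`∑_{n,m ≤ Y} β(n,m)² ≤ 2 ∑_{n,m ≤ Y} balance (3/2) n m ≪ Y^{5/2}`; for the others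
`β(a²t, b²t) = balance (3/2) a b`, and they contribute
`∑_t (∑_{a,b ≤ √(Y/t)} balance (3/2) a b)² ≪ ∑_t (Y/t)^{5/2} ≪ Y^{5/2}`.
The divisor bound `d(n) ≪ n^{ε/4}` costs the remaining factor `Y^ε`.
-/

open Finset

lemma exists_add_one_le_mul_pow {x : ℝ} (hx : 1 < x) :
    ∃ C ≥ (1 : ℝ), ∀ e : ℕ, (e + 1 : ℝ) ≤ C * x ^ e := by
  have hx' : 0 < x - 1 := by linarith
  refine ⟨1 + 1 / (x - 1), by simp [hx'.le], fun e => ?_⟩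
  have bernoulli : 1 + e * (x - 1) ≤ x ^ e := by
    simpa using one_add_mul_le_pow (by linarith : (-2 : ℝ) ≤ x - 1) e
  have hexpand : (1 + 1 / (x - 1)) * (1 + e * (x - 1)) = e + 1 + (e * (x - 1) + 1 / (x - 1)) := by
    field_simp
    ring
  calc (e + 1 : ℝ) ≤ (1 + 1 / (x - 1)) * (1 + e * (x - 1)) := by
        rw [hexpand]
        have : 0 ≤ e * (x - 1) + 1 / (x - 1) := by positivity
        linarith
    _ ≤ (1 + 1 / (x - 1)) * x ^ e := by gcongr

lemma two_le_rpow_of_ceil_le {δ : ℝ} (hδ : 0 < δ) {p : ℕ} (hp : ⌈(2 : ℝ) ^ δ⁻¹⌉₊ ≤ p) :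
    (2 : ℝ) ≤ (p : ℝ) ^ δ := by
  calc (2 : ℝ) = ((2 : ℝ) ^ δ⁻¹) ^ δ := by
        rw [← Real.rpow_mul zero_le_two, inv_mul_cancel₀ hδ.ne', Real.rpow_one]
    _ ≤ (p : ℝ) ^ δ := by
        gcongr
        exact (Nat.le_ceil _).trans (by exact_mod_cast hp)

lemma exists_card_divisors_le_mul_rpow {δ : ℝ} (hδ : 0 < δ) :
    ∃ A > (0 : ℝ), ∀ n : ℕ, n ≠ 0 → d n ≤ A * (n : ℝ) ^ δ := by
  obtain ⟨C, hC, hCe⟩ := exists_add_one_le_mul_pow (Real.one_lt_rpow one_lt_two hδ)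
  set B := ⌈(2 : ℝ) ^ δ⁻¹⌉₊
  -- small primes cost a factor `C`; for `p ≥ B` we have `2 ≤ p ^ δ`, so `e + 1 ≤ (p ^ δ) ^ e`
  have local_bound : ∀ p e : ℕ, p.Prime →
      (e + 1 : ℝ) ≤ (if p < B then C else 1) * ((p : ℝ) ^ δ) ^ e := by
    intro p e hp
    split_ifs with hpB
    · calc (e + 1 : ℝ) ≤ C * ((2 : ℝ) ^ δ) ^ e := hCe e
        _ ≤ C * ((p : ℝ) ^ δ) ^ e := by gcongr; exact_mod_cast hp.two_le
    · calc (e + 1 : ℝ) ≤ 2 ^ e := by exact_mod_cast Nat.lt_two_pow_self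
        _ ≤ 1 * ((p : ℝ) ^ δ) ^ e := by
            rw [one_mul]
            gcongr
            exact two_le_rpow_of_ceil_le hδ (not_lt.mp hpB)
  refine ⟨C ^ B, by positivity, fun n hn => ?_⟩
  have hprod : (n : ℝ) ^ δ = ∏ p ∈ n.primeFactors, ((p : ℝ) ^ δ) ^ n.factorization p := by
    conv_lhs => rw [← Nat.prod_factorization_pow_eq_self hn]
    rw [Finsupp.prod, Nat.support_factorization, Nat.cast_prod,
      ← Real.finsetProd_rpow _ _ fun p _ => by positivity]
    refine prod_congr rfl fun p _ => ?_
    rw [Nat.cast_pow, Real.rpow_pow_comm p.cast_nonneg]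
  have hsmall : ∏ p ∈ n.primeFactors, (if p < B then C else 1) ≤ C ^ B := by
    rw [prod_ite, prod_const, prod_const_one, mul_one]
    refine pow_le_pow_right₀ hC ((card_le_card fun p hp => ?_).trans (card_range B).le)
    exact mem_range.mpr (mem_filter.mp hp).2
  calc d n = ∏ p ∈ n.primeFactors, ((n.factorization p : ℝ) + 1) := by
        simp [d, Nat.card_divisors hn]
    _ ≤ ∏ p ∈ n.primeFactors, (if p < B then C else 1) * ((p : ℝ) ^ δ) ^ n.factorization p :=
        prod_le_prod (fun _ _ => by positivity)
          fun p hp => local_bound p _ (Nat.prime_of_mem_primeFactors hp)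
    _ ≤ C ^ B * (n : ℝ) ^ δ := by
        rw [prod_mul_distrib, hprod]
        gcongr

lemma squarefree_eq_of_isSquare_sq_mul_mul_sq_mul {t s a b : ℕ} (ht : Squarefree t)
    (hs : Squarefree s) (ha : a ≠ 0) (hb : b ≠ 0) (h : IsSquare (a ^ 2 * t * (b ^ 2 * s))) :
    t = s := by
  obtain ⟨w, hw⟩ := h
  have hw0 : w ≠ 0 := by rintro rfl; simp_all [ht.ne_zero, hs.ne_zero]
  refine Nat.eq_of_factorization_eq ht.ne_zero hs.ne_zero fun p => ?_
  have hp := congrArg (·.factorization p) hw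
  simp only [Nat.factorization_mul, Nat.factorization_pow, ha, hb, hw0, ht.ne_zero, hs.ne_zero,
    pow_ne_zero, mul_ne_zero_iff, ne_eq, not_false_eq_true, and_self, Finsupp.add_apply,
    Finsupp.smul_apply, smul_eq_mul] at hp
  have := ht.natFactorization_le_one p
  have := hs.natFactorization_le_one p
  omega

lemma exists_sq_mul_of_isSquare_mul {n m : ℕ} (hn : 0 < n) (hm : 0 < m) (h : IsSquare (n * m)) :
    ∃ t a b : ℕ, Squarefree t ∧ n = a ^ 2 * t ∧ m = b ^ 2 * t := by
  obtain ⟨t, a, -, ha, rfl, ht⟩ := Nat.sq_mul_squarefree_of_pos hn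
  obtain ⟨s, b, -, hb, rfl, hs⟩ := Nat.sq_mul_squarefree_of_pos hm
  obtain rfl := squarefree_eq_of_isSquare_sq_mul_mul_sq_mul ht hs ha.ne' hb.ne' h
  exact ⟨t, a, b, ht, rfl, rfl⟩

lemma isSquare_of_sqrt_sub_sqrt_eq_ratCast {u v : ℕ} {q : ℚ} (hq : q ≠ 0)
    (h : √(u : ℝ) - √v = q) : IsSquare u ∧ IsSquare v := by
  -- `√u + √v = (u - v) / (√u - √v)` is rational too
  have hsum : √(u : ℝ) + √v = (((u - v) / q : ℚ) : ℝ) := by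
    have hq' : (q : ℝ) ≠ 0 := by exact_mod_cast hq
    rw [Rat.cast_div, eq_div_iff hq', ← h]
    push_cast
    nlinarith [Real.sq_sqrt (u.cast_nonneg (α := ℝ)), Real.sq_sqrt (v.cast_nonneg (α := ℝ))]
  have of_rat : ∀ w : ℕ, ∀ r : ℚ, √(w : ℝ) = r → IsSquare w := fun w r hr => by
    by_contra hw
    exact irrational_sqrt_natCast_iff.mpr hw ⟨r, hr.symm⟩
  exact ⟨of_rat u (((u - v) / q + q) / 2) (by push_cast at hsum ⊢; linarith),
    of_rat v (((u - v) / q - q) / 2) (by push_cast at hsum ⊢; linarith)⟩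

lemma eq_and_eq_or_eq_and_eq_of_add_eq_of_mul_eq {n m k l : ℕ} (hs : n + m = k + l)
    (hp : n * m = k * l) : (k = n ∧ l = m) ∨ (k = m ∧ l = n) := by
  have hs' : (n + m : ℤ) = k + l := by exact_mod_cast hs
  have hp' : (n * m : ℤ) = k * l := by exact_mod_cast hp
  have : ((k : ℤ) - n) * ((k : ℤ) - m) = 0 := by linear_combination (-(k : ℤ)) * hs' + hp'
  rcases mul_eq_zero.mp this with h | h <;> [left; right] <;> omega

lemma sqrt_natCast_sq_mul (a t : ℕ) : √((a ^ 2 * t : ℕ) : ℝ) = a * √t := by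
  push_cast
  rw [Real.sqrt_mul (by positivity), Real.sqrt_sq a.cast_nonneg]

theorem eq_or_exists_sq_mul_of_sqrt_add_sqrt_eq {n m k l : ℕ} (hn : 0 < n) (hm : 0 < m)
    (hk : 0 < k) (hl : 0 < l) (h : √(n : ℝ) + √m = √k + √l) :
    (k = n ∧ l = m) ∨ (k = m ∧ l = n) ∨
      ∃ t a b c e : ℕ, n = a ^ 2 * t ∧ m = b ^ 2 * t ∧ k = c ^ 2 * t ∧ l = e ^ 2 * t := by
  have hsq : √((n * m : ℕ) : ℝ) - √((k * l : ℕ) : ℝ) = (((k + l - n - m : ℤ) / 2 : ℚ) : ℝ) := by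
    have := congrArg (· ^ 2) h
    simp only [add_sq, Real.sq_sqrt (Nat.cast_nonneg _)] at this
    push_cast
    rw [Real.sqrt_mul (Nat.cast_nonneg _), Real.sqrt_mul (Nat.cast_nonneg _)]
    linarith
  by_cases hr : (k + l - n - m : ℤ) = 0
  · refine (eq_and_eq_or_eq_and_eq_of_add_eq_of_mul_eq (by omega) ?_).imp_right Or.inl
    rw [hr, Int.cast_zero, zero_div, Rat.cast_zero, sub_eq_zero,
      Real.sqrt_inj (Nat.cast_nonneg _) (Nat.cast_nonneg _)] at hsq
    exact_mod_cast hsq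
  right; right
  obtain ⟨hnm, hkl⟩ := isSquare_of_sqrt_sub_sqrt_eq_ratCast
    (div_ne_zero (by exact_mod_cast hr) two_ne_zero) hsq
  obtain ⟨t, a, b, ht, rfl, rfl⟩ := exists_sq_mul_of_isSquare_mul hn hm hnm
  obtain ⟨u, c, e, hu, rfl, rfl⟩ := exists_sq_mul_of_isSquare_mul hk hl hkl
  -- `(a + b) √t = (c + e) √u` forces the squarefree kernels to agree
  have hab : ((a + b) ^ 2 * t : ℕ) = ((c + e) ^ 2 * u : ℕ) := by
    simp only [sqrt_natCast_sq_mul, ← add_mul] at h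
    have := congrArg (· ^ 2) h
    simp only [mul_pow, Real.sq_sqrt (Nat.cast_nonneg _)] at this
    exact_mod_cast this
  have ha : a ≠ 0 := by rintro rfl; simp at hn
  have hc : c ≠ 0 := by rintro rfl; simp at hk
  obtain rfl : t = u := squarefree_eq_of_isSquare_sq_mul_mul_sq_mul (a := a + b) (b := c + e)
    ht hu (by omega) (by omega) ⟨(c + e) ^ 2 * u, by rw [hab]⟩
  exact ⟨t, a, b, c, e, rfl, rfl, rfl, rfl⟩

noncomputable def balance (s x y : ℝ) : ℝ := (x / y) ^ s + (y / x) ^ s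

lemma balance_nonneg (s : ℝ) {x y : ℝ} (hx : 0 ≤ x) (hy : 0 ≤ y) : 0 ≤ balance s x y := by
  unfold balance; positivity

lemma balance_comm (s x y : ℝ) : balance s x y = balance s y x := add_comm _ _

lemma balance_eq_div_add_div (s : ℝ) {x y : ℝ} (hx : 0 ≤ x) (hy : 0 ≤ y) :
    balance s x y = x ^ s / y ^ s + y ^ s / x ^ s := by
  rw [balance, Real.div_rpow hx hy, Real.div_rpow hy hx]

lemma sq_balance_le (s : ℝ) {x y : ℝ} (hx : 0 < x) (hy : 0 < y) :
    balance s x y ^ 2 ≤ 2 * balance (2 * s) x y := by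
  have hu : 0 < (x / y) ^ s := by positivity
  have huv : (x / y) ^ s * (y / x) ^ s = 1 := by
    rw [← Real.mul_rpow (by positivity) (by positivity),
      show x / y * (y / x) = 1 by field_simp, Real.one_rpow]
  have hsq : ∀ z : ℝ, 0 ≤ z → z ^ (2 * s) = (z ^ s) ^ 2 := fun z hz => by
    rw [mul_comm, Real.rpow_mul hz, Real.rpow_two]
  rw [balance, balance, hsq _ (by positivity), hsq _ (by positivity)]
  nlinarith [sq_nonneg ((x / y) ^ s - (y / x) ^ s)]

lemma balance_sq_mul_sq_mul (s : ℝ) {t a b : ℝ} (ht : 0 < t) (ha : 0 ≤ a) (hb : 0 ≤ b) :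
    balance s (a ^ 2 * t) (b ^ 2 * t) = balance (2 * s) a b := by
  simp only [balance, mul_div_mul_right _ _ ht.ne', ← div_pow, Real.rpow_mul (div_nonneg ha hb),
    Real.rpow_mul (div_nonneg hb ha), Real.rpow_two]

lemma rpow_add_rpow_eq_balance_mul (s : ℝ) {x y : ℝ} (hx : 0 < x) (hy : 0 < y) :
    x ^ (2 * s) + y ^ (2 * s) = balance s x y * (x * y) ^ s := by
  rw [balance_eq_div_add_div s hx.le hy.le, Real.mul_rpow hx.le hy.le, two_mul,
    Real.rpow_add hx, Real.rpow_add hy]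
  field_simp

lemma max_pow_three_div_rpow_le {n m k l : ℝ} (hn : 0 < n) (hm : 0 < m) (hk : 0 < k) (hl : 0 < l)
    (h : √n + √m = √k + √l) :
    max (max n m) (max k l) ^ 3 / (n * m * k * l) ^ ((3 : ℝ) / 4)
      ≤ 16 * balance (3 / 4) n m * balance (3 / 4) k l := by
  have hroot : ∀ x : ℝ, 0 ≤ x → √x ^ 3 = x ^ (2 * (3 / 4 : ℝ)) := fun x hx => by
    rw [Real.sqrt_eq_rpow, ← Real.rpow_mul_natCast hx]; norm_num
  have le_sq : ∀ x y : ℝ, 0 ≤ x → 0 ≤ y → x ≤ (√x + √y) ^ 2 := fun x y hx hy => by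
    nlinarith [Real.sq_sqrt hx, Real.sqrt_nonneg x, Real.sqrt_nonneg y]
  have hmax : max (max n m) (max k l) ^ 3 ≤ (√n + √m) ^ 3 * (√k + √l) ^ 3 := by
    have hσ : max (max n m) (max k l) ≤ (√n + √m) ^ 2 := by
      refine max_le (max_le (le_sq n m hn.le hm.le) ?_) (max_le ?_ ?_)
      · rw [add_comm]; exact le_sq m n hm.le hn.le
      · rw [h]; exact le_sq k l hk.le hl.le
      · rw [h, add_comm]; exact le_sq l k hl.le hk.le
    calc max (max n m) (max k l) ^ 3 ≤ ((√n + √m) ^ 2) ^ 3 := by gcongr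
      _ = (√n + √m) ^ 3 * (√k + √l) ^ 3 := by rw [← h]; ring
  have hcube : ∀ x y : ℝ, 0 < x → 0 < y →
      (√x + √y) ^ 3 ≤ 4 * (balance (3 / 4) x y * (x * y) ^ ((3 : ℝ) / 4)) := fun x y hx hy => by
    rw [← rpow_add_rpow_eq_balance_mul _ hx hy, ← hroot x hx.le, ← hroot y hy.le]
    have := add_pow_le (Real.sqrt_nonneg x) (Real.sqrt_nonneg y) 3
    norm_num at this
    exact this
  rw [div_le_iff₀ (by positivity), show n * m * k * l = (n * m) * (k * l) by ring,
    Real.mul_rpow (by positivity) (by positivity)]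
  calc max (max n m) (max k l) ^ 3 ≤ (√n + √m) ^ 3 * (√k + √l) ^ 3 := hmax
    _ ≤ (4 * (balance (3 / 4) n m * (n * m) ^ ((3 : ℝ) / 4)))
          * (4 * (balance (3 / 4) k l * (k * l) ^ ((3 : ℝ) / 4))) := by
        exact mul_le_mul (hcube n m hn hm) (hcube k l hk hl) (by positivity)
          (by have := balance_nonneg (3 / 4) hn.le hm.le; positivity)
    _ = _ := by ring

noncomputable def realZeta (s : ℝ) : ℝ := ∑' n : ℕ, 1 / (n : ℝ) ^ s

lemma sum_Icc_one_div_rpow_le_realZeta {s : ℝ} (hs : 1 < s) (L : ℕ) :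
    ∑ a ∈ Icc 1 L, 1 / (a : ℝ) ^ s ≤ realZeta s :=
  (Real.summable_one_div_nat_rpow.mpr hs).sum_le_tsum _ fun _ _ => by positivity

lemma realZeta_pos {s : ℝ} (hs : 1 < s) : 0 < realZeta s :=
  (Real.summable_one_div_nat_rpow.mpr hs).tsum_pos (fun _ => by positivity) 1 (by simp)

lemma sum_Icc_rpow_le {s : ℝ} (hs : 0 ≤ s) (L : ℕ) :
    ∑ a ∈ Icc 1 L, (a : ℝ) ^ s ≤ (L : ℝ) ^ (s + 1) := by
  calc ∑ a ∈ Icc 1 L, (a : ℝ) ^ s ≤ ∑ _a ∈ Icc 1 L, (L : ℝ) ^ s :=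
        sum_le_sum fun a ha => by gcongr; exact_mod_cast (mem_Icc.mp ha).2
    _ = (L : ℝ) ^ (s + 1) := by
        rw [sum_const, Nat.card_Icc, nsmul_eq_mul, Real.rpow_add_one' L.cast_nonneg (by linarith)]
        push_cast
        ring

def pairBox (L : ℕ) : Finset (ℕ × ℕ) := Icc 1 L ×ˢ Icc 1 L

lemma sum_pairBox_balance_le {s : ℝ} (hs : 1 < s) (L : ℕ) :
    ∑ q ∈ pairBox L, balance s q.1 q.2 ≤ 2 * realZeta s * (L : ℝ) ^ (s + 1) := by
  have hsplit : ∀ q : ℕ × ℕ, balance s q.1 q.2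
      = (q.1 : ℝ) ^ s * (1 / (q.2 : ℝ) ^ s) + (q.2 : ℝ) ^ s * (1 / (q.1 : ℝ) ^ s) := fun q => by
    rw [balance_eq_div_add_div s (Nat.cast_nonneg _) (Nat.cast_nonneg _)]
    ring
  have hsum : ∑ q ∈ pairBox L, balance s q.1 q.2
      = 2 * ((∑ a ∈ Icc 1 L, (a : ℝ) ^ s) * ∑ b ∈ Icc 1 L, 1 / (b : ℝ) ^ s) := by
    simp only [hsplit, pairBox, sum_product, sum_add_distrib, sum_mul_sum]
    rw [sum_comm (s := Icc 1 L) (t := Icc 1 L)]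
    ring
  rw [hsum, mul_assoc, mul_comm (realZeta s)]
  gcongr
  · exact sum_Icc_rpow_le (by linarith) L
  · exact sum_Icc_one_div_rpow_le_realZeta hs L

noncomputable def H₁Term : ℕ × ℕ × ℕ × ℕ → ℝ
  | (n, m, k, l) =>
    if Real.sqrt n + Real.sqrt m = Real.sqrt k + Real.sqrt l then
      d n * d m * d k * d l * (max (max n m) (max k l) : ℝ) ^ 3
        / ((n * m * k * l : ℕ) : ℝ) ^ ((3:ℝ)/4)
    else 0

def quadBox (N : ℕ) : Finset (ℕ × ℕ × ℕ × ℕ) := Icc 1 N ×ˢ Icc 1 N ×ˢ Icc 1 N ×ˢ Icc 1 N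

lemma H₁_eq_sum_quadBox (Y : ℝ) : H₁ Y = ∑ p ∈ quadBox ⌊Y⌋₊, H₁Term p := by
  rw [H₁, quadBox]
  simp only [sum_product]
  rfl

lemma d_nonneg (n : ℕ) : 0 ≤ d n := Nat.cast_nonneg _

lemma H₁Term_nonneg (p : ℕ × ℕ × ℕ × ℕ) : 0 ≤ H₁Term p := by
  obtain ⟨n, m, k, l⟩ := p
  rw [H₁Term]
  split_ifs
  · have := d_nonneg n; have := d_nonneg m; have := d_nonneg k; have := d_nonneg l
    positivity
  · rfl

def offDiagIndex (N : ℕ) : Finset (Σ _ : ℕ, (ℕ × ℕ) × (ℕ × ℕ)) :=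
  (Icc 1 N).sigma fun t => pairBox (Nat.sqrt (N / t)) ×ˢ pairBox (Nat.sqrt (N / t))

def scaleSq : (Σ _ : ℕ, (ℕ × ℕ) × (ℕ × ℕ)) → ℕ × ℕ × ℕ × ℕ
  | ⟨t, (a, b), (c, e)⟩ => (a ^ 2 * t, b ^ 2 * t, c ^ 2 * t, e ^ 2 * t)

lemma mem_offDiagIndex {N t a b c e : ℕ} :
    ⟨t, (a, b), (c, e)⟩ ∈ offDiagIndex N ↔ 1 ≤ t ∧ t ≤ N ∧ 1 ≤ a ∧ 1 ≤ b ∧ 1 ≤ c ∧ 1 ≤ e ∧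
      a ^ 2 * t ≤ N ∧ b ^ 2 * t ≤ N ∧ c ^ 2 * t ≤ N ∧ e ^ 2 * t ≤ N := by
  simp only [offDiagIndex, pairBox, mem_sigma, mem_product, mem_Icc]
  constructor
  · rintro ⟨⟨ht, htN⟩, ⟨⟨ha, ha'⟩, hb, hb'⟩, ⟨hc, hc'⟩, he, he'⟩
    simp only [Nat.le_sqrt', Nat.le_div_iff_mul_le ht] at ha' hb' hc' he'
    exact ⟨ht, htN, ha, hb, hc, he, ha', hb', hc', he'⟩
  · rintro ⟨ht, htN, ha, hb, hc, he, ha', hb', hc', he'⟩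
    simp only [Nat.le_sqrt', Nat.le_div_iff_mul_le ht]
    exact ⟨⟨ht, htN⟩, ⟨⟨ha, ha'⟩, hb, hb'⟩, ⟨hc, hc'⟩, he, he'⟩

lemma sum_le_sum_add_sum_of_ne_zero {ι M : Type*} [DecidableEq ι] [AddCommMonoid M]
    [PartialOrder M] [IsOrderedAddMonoid M] {f : ι → M} (hf : ∀ i, 0 ≤ f i)
    {s t u : Finset ι} (h : ∀ i ∈ s, f i ≠ 0 → i ∈ t ∪ u) :
    ∑ i ∈ s, f i ≤ ∑ i ∈ t, f i + ∑ i ∈ u, f i := by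
  classical
  calc ∑ i ∈ s, f i = ∑ i ∈ s with f i ≠ 0, f i := (sum_filter_ne_zero s).symm
    _ ≤ ∑ i ∈ t ∪ u, f i :=
        sum_le_sum_of_subset_of_nonneg (fun i hi => h i (mem_filter.mp hi).1 (mem_filter.mp hi).2)
          fun i _ _ => hf i
    _ ≤ ∑ i ∈ t, f i + ∑ i ∈ u, f i := by
        rw [← sum_union_inter]
        exact le_add_of_nonneg_right (sum_nonneg fun i _ => hf i)

lemma sum_quadBox_le (N : ℕ) :
    ∑ p ∈ quadBox N, H₁Term p
      ≤ ∑ q ∈ pairBox N, H₁Term (q.1, q.2, q.1, q.2) + ∑ q ∈ pairBox N, H₁Term (q.1, q.2, q.2, q.1)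
        + ∑ x ∈ offDiagIndex N, H₁Term (scaleSq x) := by
  classical
  have hsupp : ∀ p ∈ quadBox N, H₁Term p ≠ 0 →
      p ∈ ((pairBox N).image fun q => (q.1, q.2, q.1, q.2))
        ∪ ((pairBox N).image fun q => (q.1, q.2, q.2, q.1)) ∪ (offDiagIndex N).image scaleSq := by
    rintro ⟨n, m, k, l⟩ hp hne
    have hsol : √(n : ℝ) + √m = √k + √l := by
      by_contra h
      exact hne (by rw [H₁Term, if_neg h])
    simp only [quadBox, mem_product, mem_Icc] at hp
    obtain ⟨⟨hn, hnN⟩, ⟨hm, hmN⟩, ⟨hk, hkN⟩, ⟨hl, hlN⟩⟩ := hp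
    simp only [mem_union, mem_image, pairBox, mem_product, mem_Icc, Prod.exists, Prod.mk.injEq]
    rcases eq_or_exists_sq_mul_of_sqrt_add_sqrt_eq hn hm hk hl hsol with
      ⟨rfl, rfl⟩ | ⟨rfl, rfl⟩ | ⟨t, a, b, c, e, rfl, rfl, rfl, rfl⟩
    · exact Or.inl (Or.inl ⟨k, l, ⟨⟨hk, hkN⟩, hl, hlN⟩, rfl, rfl, rfl, rfl⟩)
    · exact Or.inl (Or.inr ⟨l, k, ⟨⟨hl, hlN⟩, hk, hkN⟩, rfl, rfl, rfl, rfl⟩)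
    · refine Or.inr ⟨⟨t, (a, b), (c, e)⟩, mem_offDiagIndex.mpr ?_, rfl⟩
      have ht : t ≠ 0 := by rintro rfl; simp at hn
      have ha : a ≠ 0 := by rintro rfl; simp at hn
      have hb : b ≠ 0 := by rintro rfl; simp at hm
      have hc : c ≠ 0 := by rintro rfl; simp at hk
      have he : e ≠ 0 := by rintro rfl; simp at hl
      have htN : t ≤ a ^ 2 * t := Nat.le_mul_of_pos_left t (by positivity)
      omega
  calc ∑ p ∈ quadBox N, H₁Term p
      ≤ ∑ p ∈ ((pairBox N).image fun q => (q.1, q.2, q.1, q.2))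
            ∪ ((pairBox N).image fun q => (q.1, q.2, q.2, q.1)), H₁Term p
        + ∑ p ∈ (offDiagIndex N).image scaleSq, H₁Term p :=
        sum_le_sum_add_sum_of_ne_zero H₁Term_nonneg hsupp
    _ ≤ _ := by
        gcongr
        · exact (sum_le_sum_add_sum_of_ne_zero H₁Term_nonneg fun p hp _ => hp).trans
            (add_le_add (sum_image_le_of_nonneg fun _ _ => H₁Term_nonneg _)
              (sum_image_le_of_nonneg fun _ _ => H₁Term_nonneg _))
        · exact sum_image_le_of_nonneg fun _ _ => H₁Term_nonneg _

section DivisorBounded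

variable {N : ℕ} {K : ℝ}

lemma H₁Term_le (hK0 : 0 ≤ K)
    (hK : ∀ p ∈ quadBox N, d p.1 * d p.2.1 * d p.2.2.1 * d p.2.2.2 ≤ K) {n m k l : ℕ}
    (hp : (n, m, k, l) ∈ quadBox N) :
    H₁Term (n, m, k, l) ≤ 16 * K * balance (3 / 4) n m * balance (3 / 4) k l := by
  have hd := hK _ hp
  simp only [quadBox, mem_product, mem_Icc] at hp
  have hb := balance_nonneg (3 / 4) (n.cast_nonneg (α := ℝ)) (m.cast_nonneg (α := ℝ))
  have hb' := balance_nonneg (3 / 4) (k.cast_nonneg (α := ℝ)) (l.cast_nonneg (α := ℝ))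
  rw [H₁Term]
  split_ifs with h
  · rw [mul_div_assoc]
    push_cast
    calc _ ≤ K * (16 * balance (3 / 4) n m * balance (3 / 4) k l) :=
          mul_le_mul hd (max_pow_three_div_rpow_le (by exact_mod_cast hp.1.1)
            (by exact_mod_cast hp.2.1.1) (by exact_mod_cast hp.2.2.1.1)
            (by exact_mod_cast hp.2.2.2.1) h) (by positivity) hK0
      _ = _ := by ring
  · positivity

lemma sum_diag_le (hK0 : 0 ≤ K)
    (hK : ∀ p ∈ quadBox N, d p.1 * d p.2.1 * d p.2.2.1 * d p.2.2.2 ≤ K) :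
    ∑ q ∈ pairBox N, H₁Term (q.1, q.2, q.1, q.2) + ∑ q ∈ pairBox N, H₁Term (q.1, q.2, q.2, q.1)
      ≤ 128 * K * realZeta (3 / 2) * (N : ℝ) ^ ((5 : ℝ) / 2) := by
  have hsq : ∀ q ∈ pairBox N, 16 * K * balance (3 / 4) q.1 q.2 * balance (3 / 4) q.1 q.2
      ≤ 32 * K * balance (3 / 2) q.1 q.2 := by
    intro q hq
    simp only [pairBox, mem_product, mem_Icc] at hq
    have := sq_balance_le (3 / 4) (x := q.1) (y := q.2) (by exact_mod_cast hq.1.1)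
      (by exact_mod_cast hq.2.1)
    norm_num at this
    nlinarith
  have hmem : ∀ q ∈ pairBox N,
      (q.1, q.2, q.1, q.2) ∈ quadBox N ∧ (q.1, q.2, q.2, q.1) ∈ quadBox N := by
    intro q hq
    simp only [pairBox, quadBox, mem_product, mem_Icc] at hq ⊢
    omega
  calc _ ≤ ∑ q ∈ pairBox N, 32 * K * balance (3 / 2) q.1 q.2
        + ∑ q ∈ pairBox N, 32 * K * balance (3 / 2) q.1 q.2 := by
        gcongr with q hq q hq
        · exact (H₁Term_le hK0 hK (hmem q hq).1).trans (hsq q hq)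
        · refine (H₁Term_le hK0 hK (hmem q hq).2).trans ?_
          rw [balance_comm _ q.2]
          exact hsq q hq
    _ = 64 * K * ∑ q ∈ pairBox N, balance (3 / 2) q.1 q.2 := by rw [← mul_sum]; ring
    _ ≤ 64 * K * (2 * realZeta (3 / 2) * (N : ℝ) ^ ((3 : ℝ) / 2 + 1)) := by
        gcongr
        exact sum_pairBox_balance_le (by norm_num) N
    _ = _ := by norm_num; ring

lemma H₁Term_scaleSq_le (hK0 : 0 ≤ K)
    (hK : ∀ p ∈ quadBox N, d p.1 * d p.2.1 * d p.2.2.1 * d p.2.2.2 ≤ K)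
    {x : Σ _ : ℕ, (ℕ × ℕ) × (ℕ × ℕ)} (hx : x ∈ offDiagIndex N) :
    H₁Term (scaleSq x)
      ≤ 16 * K * (balance (3 / 2) x.2.1.1 x.2.1.2 * balance (3 / 2) x.2.2.1 x.2.2.2) := by
  obtain ⟨t, ⟨a, b⟩, ⟨c, e⟩⟩ := x
  obtain ⟨ht, -, ha, hb, hc, he, ha', hb', hc', he'⟩ := mem_offDiagIndex.mp hx
  have hmem : scaleSq ⟨t, (a, b), (c, e)⟩ ∈ quadBox N := by
    simp only [scaleSq, quadBox, mem_product, mem_Icc]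
    exact ⟨⟨Nat.mul_pos (pow_pos ha 2) ht, ha'⟩, ⟨Nat.mul_pos (pow_pos hb 2) ht, hb'⟩,
      ⟨Nat.mul_pos (pow_pos hc 2) ht, hc'⟩, Nat.mul_pos (pow_pos he 2) ht, he'⟩
  refine (H₁Term_le hK0 hK hmem).trans (le_of_eq ?_)
  have ht' : (0 : ℝ) < t := by exact_mod_cast ht
  push_cast
  rw [balance_sq_mul_sq_mul _ ht' a.cast_nonneg b.cast_nonneg,
    balance_sq_mul_sq_mul _ ht' c.cast_nonneg e.cast_nonneg]
  norm_num
  ring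

lemma sq_sum_pairBox_sqrt_div_le {t : ℕ} (ht : 0 < t) :
    (∑ q ∈ pairBox (Nat.sqrt (N / t)), balance (3 / 2) q.1 q.2) ^ 2
      ≤ 4 * realZeta (3 / 2) ^ 2 * ((N : ℝ) ^ ((5 : ℝ) / 2) * (1 / (t : ℝ) ^ ((5 : ℝ) / 2))) := by
  set L := Nat.sqrt (N / t)
  have ht' : (0 : ℝ) < t := by exact_mod_cast ht
  have hL : (L : ℝ) ^ 2 ≤ N / t :=
    le_trans (by exact_mod_cast Nat.sqrt_le' (N / t)) Nat.cast_div_le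
  calc _ ≤ (2 * realZeta (3 / 2) * (L : ℝ) ^ ((3 : ℝ) / 2 + 1)) ^ 2 := by
        gcongr
        · exact sum_nonneg fun q _ => balance_nonneg _ q.1.cast_nonneg q.2.cast_nonneg
        · exact sum_pairBox_balance_le (by norm_num) L
    _ = 4 * realZeta (3 / 2) ^ 2 * ((L : ℝ) ^ 2) ^ ((5 : ℝ) / 2) := by
        rw [mul_pow, mul_pow, ← Real.rpow_pow_comm L.cast_nonneg]
        norm_num
    _ ≤ 4 * realZeta (3 / 2) ^ 2 * ((N : ℝ) / t) ^ ((5 : ℝ) / 2) := by gcongr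
    _ = _ := by rw [Real.div_rpow N.cast_nonneg ht'.le]; ring

lemma sum_offDiag_le (hK0 : 0 ≤ K)
    (hK : ∀ p ∈ quadBox N, d p.1 * d p.2.1 * d p.2.2.1 * d p.2.2.2 ≤ K) :
    ∑ x ∈ offDiagIndex N, H₁Term (scaleSq x)
      ≤ 64 * K * realZeta (3 / 2) ^ 2 * realZeta (5 / 2) * (N : ℝ) ^ ((5 : ℝ) / 2) := by
  calc ∑ x ∈ offDiagIndex N, H₁Term (scaleSq x)
      ≤ ∑ x ∈ offDiagIndex N,
          16 * K * (balance (3 / 2) x.2.1.1 x.2.1.2 * balance (3 / 2) x.2.2.1 x.2.2.2) :=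
        sum_le_sum fun x hx => H₁Term_scaleSq_le hK0 hK hx
    _ = 16 * K * ∑ t ∈ Icc 1 N,
          (∑ q ∈ pairBox (Nat.sqrt (N / t)), balance (3 / 2) q.1 q.2) ^ 2 := by
        rw [← mul_sum, offDiagIndex, sum_sigma]
        simp only [sum_product, sum_mul_sum, sq]
    _ ≤ 16 * K * ∑ t ∈ Icc 1 N,
          4 * realZeta (3 / 2) ^ 2 * ((N : ℝ) ^ ((5 : ℝ) / 2) * (1 / (t : ℝ) ^ ((5 : ℝ) / 2))) := by
        gcongr with t ht
        exact sq_sum_pairBox_sqrt_div_le (mem_Icc.mp ht).1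
    _ ≤ 16 * K * (4 * realZeta (3 / 2) ^ 2 * ((N : ℝ) ^ ((5 : ℝ) / 2) * realZeta (5 / 2))) := by
        rw [← mul_sum, ← mul_sum]
        gcongr
        exact sum_Icc_one_div_rpow_le_realZeta (by norm_num) N
    _ = _ := by ring

end DivisorBounded

lemma prod_d_le_of_mem_quadBox {A δ : ℝ} (hA0 : 0 ≤ A) (hδ : 0 ≤ δ)
    (hA : ∀ n : ℕ, n ≠ 0 → d n ≤ A * (n : ℝ) ^ δ) {Y : ℝ} (hY : 0 ≤ Y) :
    ∀ p ∈ quadBox ⌊Y⌋₊, d p.1 * d p.2.1 * d p.2.2.1 * d p.2.2.2 ≤ (A * Y ^ δ) ^ 4 := by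
  have hd : ∀ n ∈ Icc 1 ⌊Y⌋₊, d n ≤ A * Y ^ δ := fun n hn => by
    obtain ⟨hn1, hnY⟩ := mem_Icc.mp hn
    have hY : (n : ℝ) ≤ Y := (Nat.le_floor_iff' (by omega)).mp hnY
    calc d n ≤ A * (n : ℝ) ^ δ := hA n (by omega)
      _ ≤ A * Y ^ δ := by gcongr
  rintro ⟨n, m, k, l⟩ hp
  simp only [quadBox, mem_product] at hp
  have := d_nonneg n; have := d_nonneg m; have := d_nonneg k; have := d_nonneg l
  calc d n * d m * d k * d l ≤ (A * Y ^ δ) * (A * Y ^ δ) * (A * Y ^ δ) * (A * Y ^ δ) := by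
        gcongr
        exacts [hd n hp.1, hd m hp.2.1, hd k hp.2.2.1, hd l hp.2.2.2]
    _ = (A * Y ^ δ) ^ 4 := by ring

theorem H₁_bound :
    ∀ ε > (0:ℝ), ∃ C > (0:ℝ), ∀ Y > (1:ℝ), H₁ Y ≤ C * Y ^ ((5:ℝ)/2 + ε) := by
  intro ε hε
  obtain ⟨A, hA0, hA⟩ := exists_card_divisors_le_mul_rpow (show 0 < ε / 4 by positivity)
  have hZ := realZeta_pos (s := 3 / 2) (by norm_num)
  have hZ' := realZeta_pos (s := 5 / 2) (by norm_num)
  refine ⟨A ^ 4 * (128 * realZeta (3 / 2) + 64 * realZeta (3 / 2) ^ 2 * realZeta (5 / 2)),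
    by positivity, fun Y hY => ?_⟩
  have hY0 : 0 ≤ Y := by linarith
  set K := (A * Y ^ (ε / 4)) ^ 4 with hK_eq
  have hK0 : 0 ≤ K := by positivity
  have hK := prod_d_le_of_mem_quadBox hA0.le (by positivity) hA hY0
  have hN : (⌊Y⌋₊ : ℝ) ^ ((5 : ℝ) / 2) ≤ Y ^ ((5 : ℝ) / 2) := by
    gcongr
    exact Nat.floor_le hY0
  calc H₁ Y = ∑ p ∈ quadBox ⌊Y⌋₊, H₁Term p := H₁_eq_sum_quadBox Y
    _ ≤ _ := sum_quadBox_le ⌊Y⌋₊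
    _ ≤ K * (128 * realZeta (3 / 2) + 64 * realZeta (3 / 2) ^ 2 * realZeta (5 / 2))
          * (⌊Y⌋₊ : ℝ) ^ ((5 : ℝ) / 2) := by
        linarith [sum_diag_le hK0 hK, sum_offDiag_le hK0 hK]
    _ ≤ K * (128 * realZeta (3 / 2) + 64 * realZeta (3 / 2) ^ 2 * realZeta (5 / 2))
          * Y ^ ((5 : ℝ) / 2) := by gcongr
    _ = _ := by
        rw [hK_eq, Real.rpow_add (by linarith), mul_pow, ← Real.rpow_mul_natCast hY0]
        norm_num
        ring
end

section
/- Let k be a positive integer. There exists a constant C_k > 0 (depending only on k) such that the following holds. Let a < b be real numbers, let f₁, …, f_k be continuous monotonic real-valued functions on [a,b] with |f_j(t)| ≤ A_j for all t ∈ [a,b] (j = 1, …, k), and let g be a real-valued function on [a,b] with a continuous monotonic derivative satisfying |g'(t)| ≥ Δ > 0 for all t ∈ [a,b]. Then |∫_a^b f₁(t) ⋯ f_k(t) e^{2πi g(t)} dt| ≤ C_k A₁ ⋯ A_k / Δ. -/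
/-!
Write `e(g) = (1/g') · g' e(g)`. Over any subinterval `[x, y]` the integral of `g' e(g)` is
`(e(g y) - e(g x)) / (2πi)`, of norm at most `1/π`, and `1/g'` is monotone with `|1/g'| ≤ 1/Δ`
because `g'` has constant sign. Monotone factors are then absorbed one at a time by a bound of
second-mean-value type: if all integrals of `φ` over subintervals have norm at most `K` and `h` is
monotone with `|h| ≤ M`, then those of `h φ` have norm at most `3MK`. To see this write
`h x + M = ∫_{-M}^{M} 1_{y < h x} dy` and swap the integrals: for fixed `y` the set `{x | y < h x}`
is a final segment. Applying this to `1/g'` and then to `f₁, …, f_k` gives `C_k = 3^(k+1)/π`.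
-/

open Real MeasureTheory Set Filter Complex intervalIntegral

def IntegralsBoundedOn (φ : ℝ → ℂ) (s : Set ℝ) (K : ℝ) : Prop :=
  ∀ x ∈ s, ∀ y ∈ s, ‖∫ t in x..y, φ t‖ ≤ K

namespace IntegralsBoundedOn

variable {φ ψ : ℝ → ℂ} {s t : Set ℝ} {a b K : ℝ}

theorem of_le (h : ∀ x ∈ s, ∀ y ∈ s, x ≤ y → ‖∫ t in x..y, φ t‖ ≤ K) :
    IntegralsBoundedOn φ s K := by
  intro x hx y hy
  rcases le_total x y with hxy | hyx
  · exact h x hx y hy hxy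
  · rw [integral_symm, norm_neg]
    exact h y hy x hx hyx

theorem mono (h : IntegralsBoundedOn φ s K) (hts : t ⊆ s) : IntegralsBoundedOn φ t K :=
  fun x hx y hy => h x (hts hx) y (hts hy)

theorem nonneg (h : IntegralsBoundedOn φ s K) {x : ℝ} (hx : x ∈ s) : 0 ≤ K := by
  simpa using h x hx x hx

theorem congr (h : IntegralsBoundedOn φ (Icc a b) K) (heq : EqOn φ ψ (Icc a b)) :
    IntegralsBoundedOn ψ (Icc a b) K := by
  intro x hx y hy
  rw [← integral_congr (heq.mono (uIcc_subset_Icc hx hy))]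
  exact h x hx y hy

end IntegralsBoundedOn

theorem norm_setIntegral_Ioc_inter_isUpperSet_le {φ : ℝ → ℂ} {c d K : ℝ} (hcd : c ≤ d)
    (hK : IntegralsBoundedOn φ (Icc c d) K) {U : Set ℝ} (hU : IsUpperSet U) :
    ‖∫ t in Ioc c d ∩ U, φ t‖ ≤ K := by
  set S := Ioc c d ∩ U
  rcases S.eq_empty_or_nonempty with hS | hS
  · simpa [hS] using hK.nonneg (left_mem_Icc.2 hcd)
  have hbdd : BddBelow S := ⟨c, fun x hx => hx.1.1.le⟩
  set u := sInf S
  have hcu : c ≤ u := le_csInf hS fun x hx => hx.1.1.le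
  have hud : u ≤ d := (csInf_le hbdd hS.some_mem).trans hS.some_mem.1.2
  have hIoc : Ioc u d ⊆ S := fun t ht => by
    obtain ⟨s, hs, hst⟩ := exists_lt_of_csInf_lt hS ht.1
    exact ⟨⟨hs.1.1.trans hst, ht.2⟩, hU hst.le hs.2⟩
  have hIcc : S ⊆ Icc u d := fun t ht => ⟨csInf_le hbdd ht, ht.1.2⟩
  have hae : S =ᵐ[volume] Ioc u d :=
    (hIcc.eventuallyLE.trans Ioc_ae_eq_Icc.symm.le).antisymm hIoc.eventuallyLE
  rw [setIntegral_congr_set hae, ← integral_of_le hud]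
  exact hK u ⟨hcu, hud⟩ d (right_mem_Icc.2 hcd)

theorem norm_integral_ofReal_mul_le_of_monotone {h : ℝ → ℝ} {φ : ℝ → ℂ} {c d M K : ℝ}
    (hcd : c ≤ d) (hh : Monotone h) (hM : ∀ t, |h t| ≤ M)
    (hφ : IntervalIntegrable φ volume c d) (hK : IntegralsBoundedOn φ (Icc c d) K) :
    ‖∫ t in c..d, (h t : ℂ) * φ t‖ ≤ 3 * M * K := by
  have hM0 : 0 ≤ M := (abs_nonneg _).trans (hM c)
  set μ := volume.restrict (Ioc c d)
  set ν := volume.restrict (Ioc (-M) M)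
  have hν : ν.real univ = 2 * M := by
    simp only [ν, measureReal_restrict_apply_univ, Real.volume_real_Ioc]
    rw [max_eq_left] <;> linarith
  have hφμ : Integrable φ μ := (intervalIntegrable_iff_integrableOn_Ioc_of_le hcd).1 hφ
  set W : Set (ℝ × ℝ) := {p | p.2 < h p.1}
  have hW : MeasurableSet W := measurableSet_lt measurable_snd (hh.measurable.comp measurable_fst)
  set G : ℝ × ℝ → ℂ := W.indicator (fun p => φ p.1)
  have hG : Integrable G (μ.prod ν) := (hφμ.comp_fst ν).indicator hW
  have hGy : ∀ x, ∫ y, G (x, y) ∂ν = ((h x + M : ℝ) : ℂ) * φ x := by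
    intro x
    have hx := abs_le.1 (hM x)
    have : Ioc (-M) M ∩ Iio (h x) = Ioo (-M) (h x) := by
      ext y; simp only [mem_inter_iff, mem_Ioc, mem_Iio, mem_Ioo]
      exact ⟨fun hy => ⟨hy.1.1, hy.2⟩, fun hy => ⟨⟨hy.1, hy.2.le.trans hx.2⟩, hy.2⟩⟩
    change ∫ y in Ioc (-M) M, (Iio (h x)).indicator (fun _ => φ x) y = _
    rw [setIntegral_indicator measurableSet_Iio, setIntegral_const, this, Real.volume_real_Ioo,
      max_eq_left (by linarith), Complex.real_smul]
    push_cast; ring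
  have hGx : ∀ y, ‖∫ x, G (x, y) ∂μ‖ ≤ K := by
    intro y
    change ‖∫ x in Ioc c d, {x | y < h x}.indicator φ x‖ ≤ K
    rw [setIntegral_indicator (measurableSet_lt measurable_const hh.measurable)]
    exact norm_setIntegral_Ioc_inter_isUpperSet_le hcd hK fun s t hst hs => hs.trans_le (hh hst)
  have hsplit :
      ∫ t in c..d, (h t : ℂ) * φ t = ∫ y, ∫ x, G (x, y) ∂μ ∂ν - M * ∫ t in c..d, φ t := by
    rw [← integral_integral_swap (f := fun x y => G (x, y)) hG, integral_of_le hcd,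
      integral_of_le hcd]
    have hhφ : Integrable (fun t => (h t : ℂ) * φ t) μ :=
      hφμ.bdd_mul (c := M) (measurable_ofReal.comp hh.measurable).aestronglyMeasurable
        (Eventually.of_forall fun t => by simpa using hM t)
    simp_rw [hGy, ofReal_add, add_mul]
    rw [integral_add hhφ (hφμ.const_mul _), MeasureTheory.integral_const_mul]
    ring
  calc ‖∫ t in c..d, (h t : ℂ) * φ t‖
      ≤ ‖∫ y, ∫ x, G (x, y) ∂μ ∂ν‖ + ‖(M : ℂ) * ∫ t in c..d, φ t‖ := by
        rw [hsplit]; exact norm_sub_le _ _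
    _ ≤ K * (2 * M) + M * K := by
        gcongr
        · simpa [hν] using norm_integral_le_of_norm_le_const (μ := ν) (Eventually.of_forall hGx)
        · rw [norm_mul, Complex.norm_real, Real.norm_of_nonneg hM0]
          exact mul_le_mul_of_nonneg_left (hK c (left_mem_Icc.2 hcd) d (right_mem_Icc.2 hcd)) hM0
    _ = 3 * M * K := by ring

namespace IntegralsBoundedOn

variable {h : ℝ → ℝ} {φ : ℝ → ℂ} {a b M K : ℝ}

theorem ofReal_mul_of_monotoneOn (hK : IntegralsBoundedOn φ (Icc a b) K)
    (hφ : IntegrableOn φ (Icc a b)) (hh : MonotoneOn h (Icc a b))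
    (hM : ∀ t ∈ Icc a b, |h t| ≤ M) :
    IntegralsBoundedOn (fun t => (h t : ℂ) * φ t) (Icc a b) (3 * M * K) := by
  rcases lt_or_ge b a with hba | hab
  · intro x hx
    exact absurd (hx.1.trans hx.2) hba.not_ge
  set h' := IccExtend hab fun x : Icc a b => h x
  have hh' : Monotone h' := (monotoneOn_iff_monotone.1 hh).IccExtend hab
  have hM' : ∀ t, |h' t| ≤ M := fun t => hM _ (projIcc a b hab t).2
  refine IntegralsBoundedOn.congr (φ := fun t => (h' t : ℂ) * φ t) ?_ fun t ht => ?_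
  · refine of_le fun x hx y hy hxy => ?_
    exact norm_integral_ofReal_mul_le_of_monotone hxy hh' hM'
      (hφ.mono_set (uIcc_subset_Icc hx hy)).intervalIntegrable
      (hK.mono (Icc_subset_Icc hx.1 hy.2))
  · simp only [h', IccExtend_of_mem hab _ ht]

theorem ofReal_mul (hK : IntegralsBoundedOn φ (Icc a b) K)
    (hφ : IntegrableOn φ (Icc a b)) (hh : MonotoneOn h (Icc a b) ∨ AntitoneOn h (Icc a b))
    (hM : ∀ t ∈ Icc a b, |h t| ≤ M) :
    IntegralsBoundedOn (fun t => (h t : ℂ) * φ t) (Icc a b) (3 * M * K) := by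
  rcases hh with hh | hh
  · exact hK.ofReal_mul_of_monotoneOn hφ hh hM
  · intro x hx y hy
    have := hK.ofReal_mul_of_monotoneOn hφ hh.neg (by simpa using hM) x hx y hy
    simpa [intervalIntegral.integral_neg] using this

theorem prod_mul {ι : Type*} {s : Finset ι} {f : ι → ℝ → ℝ} {A : ι → ℝ} {E : ℝ → ℂ}
    (hK : IntegralsBoundedOn E (Icc a b) K) (hE : ContinuousOn E (Icc a b))
    (hfc : ∀ j ∈ s, ContinuousOn (f j) (Icc a b))
    (hfm : ∀ j ∈ s, MonotoneOn (f j) (Icc a b) ∨ AntitoneOn (f j) (Icc a b))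
    (hfA : ∀ j ∈ s, ∀ t ∈ Icc a b, |f j t| ≤ A j) :
    IntegralsBoundedOn (fun t => ((∏ j ∈ s, f j t : ℝ) : ℂ) * E t) (Icc a b)
      (3 ^ s.card * (∏ j ∈ s, A j) * K) := by
  classical
  induction s using Finset.induction_on with
  | empty => simpa using hK
  | insert i s hi ih =>
    simp only [Finset.forall_mem_insert] at hfc hfm hfA
    have hφ : ContinuousOn (fun t => ((∏ j ∈ s, f j t : ℝ) : ℂ) * E t) (Icc a b) :=
      (continuous_ofReal.comp_continuousOn (continuousOn_finsetProd s hfc.2)).mul hE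
    have := (ih hfc.2 hfm.2 hfA.2).ofReal_mul hφ.integrableOn_Icc hfm.1 hfA.1
    convert this using 1
    · ext t
      rw [Finset.prod_insert hi]
      push_cast
      ring
    · rw [Finset.card_insert_of_notMem hi, Finset.prod_insert hi, pow_succ]
      ring

end IntegralsBoundedOn

theorem ContinuousOn.cexp_two_pi_I_mul {g : ℝ → ℝ} {s : Set ℝ} (hg : ContinuousOn g s) :
    ContinuousOn (fun t => exp (2 * π * I * g t)) s :=
  (continuousOn_const.mul (continuous_ofReal.comp_continuousOn hg)).cexp

theorem integral_deriv_mul_exp_two_pi_I {g g' : ℝ → ℝ} {x y : ℝ}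
    (hg : ∀ t ∈ uIcc x y, HasDerivAt g (g' t) t) (hg' : ContinuousOn g' (uIcc x y)) :
    ∫ t in x..y, (g' t : ℂ) * exp (2 * π * I * g t) =
      (exp (2 * π * I * g y) - exp (2 * π * I * g x)) / (2 * π * I) := by
  have hc : (2 * π * I : ℂ) ≠ 0 := by simp [pi_ne_zero]
  have hder : ∀ t ∈ uIcc x y, HasDerivAt (fun t => exp (2 * π * I * g t) / (2 * π * I))
      ((g' t : ℂ) * exp (2 * π * I * g t)) t := fun t ht => by
    refine (((hg t ht).ofReal_comp.const_mul (2 * π * I)).cexp.div_const _).congr_deriv ?_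
    field_simp
  have hgc : ContinuousOn g (uIcc x y) := fun t ht => (hg t ht).continuousAt.continuousWithinAt
  rw [integral_eq_sub_of_hasDerivAt hder
    ((continuous_ofReal.comp_continuousOn hg').mul hgc.cexp_two_pi_I_mul).intervalIntegrable,
    sub_div]

theorem norm_integral_deriv_mul_exp_two_pi_I_le {g g' : ℝ → ℝ} {x y : ℝ}
    (hg : ∀ t ∈ uIcc x y, HasDerivAt g (g' t) t) (hg' : ContinuousOn g' (uIcc x y)) :
    ‖∫ t in x..y, (g' t : ℂ) * exp (2 * π * I * g t)‖ ≤ 1 / π := by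
  have hnorm : ∀ t, ‖exp (2 * π * I * g t)‖ = 1 := fun t => by
    rw [show 2 * π * I * g t = ((2 * π * g t : ℝ) : ℂ) * I by push_cast; ring,
      norm_exp_ofReal_mul_I]
  rw [integral_deriv_mul_exp_two_pi_I hg hg', norm_div]
  calc ‖exp (2 * π * I * g y) - exp (2 * π * I * g x)‖ / ‖2 * π * I‖
      ≤ (1 + 1) / (2 * π) := by
        gcongr
        · exact (norm_sub_le _ _).trans_eq (by rw [hnorm, hnorm])
        · simp [abs_of_pos pi_pos]
    _ = 1 / π := by field_simp; ring

theorem monotoneOn_or_antitoneOn_inv {u : ℝ → ℝ} {s : Set ℝ} (hs : IsPreconnected s)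
    (hu : ContinuousOn u s) (hne : ∀ x ∈ s, u x ≠ 0) (hm : MonotoneOn u s ∨ AntitoneOn u s) :
    MonotoneOn (fun x => (u x)⁻¹) s ∨ AntitoneOn (fun x => (u x)⁻¹) s := by
  rcases hs.mapsTo_Ioi_or_Iio hu hne with hpos | hneg <;> rcases hm with hm | hm
  · exact Or.inr fun x hx y hy hxy => (inv_le_inv₀ (hpos hy) (hpos hx)).2 (hm hx hy hxy)
  · exact Or.inl fun x hx y hy hxy => (inv_le_inv₀ (hpos hx) (hpos hy)).2 (hm hx hy hxy)
  · exact Or.inr fun x hx y hy hxy => (inv_le_inv_of_neg (hneg hy) (hneg hx)).2 (hm hx hy hxy)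
  · exact Or.inl fun x hx y hy hxy => (inv_le_inv_of_neg (hneg hx) (hneg hy)).2 (hm hx hy hxy)

theorem integralsBoundedOn_exp_two_pi_I_of_le_abs_deriv {g g' : ℝ → ℝ} {a b Δ : ℝ}
    (hg : ∀ t ∈ Icc a b, HasDerivAt g (g' t) t) (hg'c : ContinuousOn g' (Icc a b))
    (hg'm : MonotoneOn g' (Icc a b) ∨ AntitoneOn g' (Icc a b))
    (hΔ : 0 < Δ) (hΔg' : ∀ t ∈ Icc a b, Δ ≤ |g' t|) :
    IntegralsBoundedOn (fun t => exp (2 * π * I * g t)) (Icc a b) (3 * Δ⁻¹ * (1 / π)) := by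
  have hne : ∀ t ∈ Icc a b, g' t ≠ 0 := fun t ht h0 => by
    have := hΔg' t ht
    rw [h0, abs_zero] at this
    linarith
  have hgc : ContinuousOn g (Icc a b) := fun t ht => (hg t ht).continuousAt.continuousWithinAt
  have hφ : IntegralsBoundedOn (fun t => (g' t : ℂ) * exp (2 * π * I * g t)) (Icc a b) (1 / π) :=
    fun x hx y hy => norm_integral_deriv_mul_exp_two_pi_I_le
      (fun t ht => hg t (uIcc_subset_Icc hx hy ht)) (hg'c.mono (uIcc_subset_Icc hx hy))
  refine (hφ.ofReal_mul (h := fun t => (g' t)⁻¹)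
    ((continuous_ofReal.comp_continuousOn hg'c).mul hgc.cexp_two_pi_I_mul).integrableOn_Icc
    (monotoneOn_or_antitoneOn_inv isPreconnected_Icc hg'c hne hg'm)
    fun t ht => ?_).congr fun t ht => ?_
  · rw [abs_inv]
    exact inv_anti₀ hΔ (hΔg' t ht)
  · have : (g' t : ℂ) ≠ 0 := ofReal_ne_zero.2 (hne t ht)
    simp only [ofReal_inv]
    field_simp

theorem first_derivative_test_general (k : ℕ) :
    ∃ C > (0:ℝ), ∀ (a b : ℝ), a < b →
      ∀ (f : Fin k → ℝ → ℝ) (A : Fin k → ℝ) (g g' : ℝ → ℝ) (Δ : ℝ),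
      (∀ j, ContinuousOn (f j) (Set.Icc a b)) →
      (∀ j, MonotoneOn (f j) (Set.Icc a b) ∨ AntitoneOn (f j) (Set.Icc a b)) →
      (∀ j, ∀ t ∈ Set.Icc a b, |f j t| ≤ A j) →
      (∀ t ∈ Set.Icc a b, HasDerivAt g (g' t) t) →
      ContinuousOn g' (Set.Icc a b) →
      (MonotoneOn g' (Set.Icc a b) ∨ AntitoneOn g' (Set.Icc a b)) →
      0 < Δ → (∀ t ∈ Set.Icc a b, Δ ≤ |g' t|) →
      ‖∫ t in a..b, ((∏ j, f j t : ℝ) : ℂ) *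
          Complex.exp (2 * Real.pi * Complex.I * g t)‖
        ≤ C * (∏ j, A j) / Δ := by
  refine ⟨3 ^ (k + 1) / π, by positivity,
    fun a b hab f A g g' Δ hfc hfm hfA hg hg'c hg'm hΔ hΔg' => ?_⟩
  have hgc : ContinuousOn g (Icc a b) := fun t ht => (hg t ht).continuousAt.continuousWithinAt
  have hbound := (integralsBoundedOn_exp_two_pi_I_of_le_abs_deriv hg hg'c hg'm hΔ hΔg').prod_mul
    (s := Finset.univ) hgc.cexp_two_pi_I_mul (fun j _ => hfc j) (fun j _ => hfm j)
    (fun j _ => hfA j) a (left_mem_Icc.2 hab.le) b (right_mem_Icc.2 hab.le)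
  calc _ ≤ 3 ^ k * (∏ j, A j) * (3 * Δ⁻¹ * (1 / π)) := by simpa using hbound
    _ = 3 ^ (k + 1) / π * (∏ j, A j) / Δ := by field_simp; ring

theorem first_derivative_test (k : ℕ) (hk : 0 < k) :
    ∃ C > (0:ℝ), ∀ (a b : ℝ), a < b →
      ∀ (f : Fin k → ℝ → ℝ) (A : Fin k → ℝ) (g g' : ℝ → ℝ) (Δ : ℝ),
      (∀ j, ContinuousOn (f j) (Set.Icc a b)) →
      (∀ j, MonotoneOn (f j) (Set.Icc a b) ∨ AntitoneOn (f j) (Set.Icc a b)) →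
      (∀ j, ∀ t ∈ Set.Icc a b, |f j t| ≤ A j) →
      (∀ t ∈ Set.Icc a b, HasDerivAt g (g' t) t) →
      ContinuousOn g' (Set.Icc a b) →
      (MonotoneOn g' (Set.Icc a b) ∨ AntitoneOn g' (Set.Icc a b)) →
      0 < Δ → (∀ t ∈ Set.Icc a b, Δ ≤ |g' t|) →
      ‖∫ t in a..b, ((∏ j, f j t : ℝ) : ℂ) *
          Complex.exp (2 * Real.pi * Complex.I * g t)‖
        ≤ C * (∏ j, A j) / Δ :=
  first_derivative_test_general k
end
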